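/- arXiv:alg-geom/9402011 — 9 statements merged into one kernel-verified Lean document; each statement's English description precedes it below -/
import Mathlib

section
/- For α ∈ I(m,p) let S(α) = {α_j + kn : 1 ≤ j ≤ m, k ∈ ℕ, k ≥ 0} ⊆ ℤ. Then for all α, β ∈ I(m,p): α ≤ β componentwise if and only if for every integer x one has #{s ∈ S(β) : s ≤ x} ≤ #{s ∈ S(α) : s ≤ x}. (The counting condition is equivalent to saying that the l-th smallest element of S(α) is at most the l-th smallest element of S(β) for every l, i.e. it is the partial order on index sets defined in the paper via the sequences f(α); thus that partial order restricted to I(m,p) agrees with the componentwise order.) -/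
/-!
`S(γ)` is parametrised by the pairs `(j, k)` via `γ_j + k n`, and since `γ` spans less than
`n` this parametrisation is injective; so `#{s ∈ S(γ) : s ≤ x}` counts the pairs with
`γ_j + k n ≤ x`, a set that can only shrink when `γ` grows. Conversely, if `β_l < α_l`, then
at `x = β_l` the set `S(β)` already contains `β_1, …, β_l`, while every element of `S(α)`
below `α_l` is one of `α_1, …, α_{l-1}`: a shifted element `α_j + k n` with `k ≥ 1` exceeds
every `α_l`.
-/

/-- `Idx n α` : the tuple `α = (α_1 < ⋯ < α_m)` of positive integers with
`α_m - α_1 < n`, i.e. membership in `I(m,p)` (where `n = m + p`). -/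
def Idx (n : ℕ) {m : ℕ} (α : Fin m → ℤ) : Prop :=
  (∀ l, 1 ≤ α l) ∧ StrictMono α ∧ ∀ k l : Fin m, k < l → α l - α k < n

/-- `Sset n α = {α_j + k*n : 1 ≤ j ≤ m, k ∈ ℕ}`. -/
def Sset (n : ℕ) {m : ℕ} (α : Fin m → ℤ) : Set ℤ :=
  {x | ∃ j : Fin m, ∃ k : ℕ, x = α j + (k : ℤ) * n}

section

variable {n m : ℕ} {γ : Fin m → ℤ}

lemma Idx.sub_lt (hγ : Idx n γ) (hn : 0 < n) (j j' : Fin m) : γ j - γ j' < n := by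
  rcases lt_trichotomy j' j with h | rfl | h
  · exact hγ.2.2 j' j h
  · simpa using hn
  · have := hγ.2.1 h
    omega

def ssetParam (n : ℕ) (γ : Fin m → ℤ) (jk : Fin m × ℕ) : ℤ :=
  γ jk.1 + (jk.2 : ℤ) * n

lemma range_ssetParam : Set.range (ssetParam n γ) = Sset n γ := by
  ext s
  simp [ssetParam, Sset, eq_comm]

lemma sep_sset_le_eq_image (x : ℤ) :
    {s ∈ Sset n γ | s ≤ x} = ssetParam n γ '' (ssetParam n γ ⁻¹' Set.Iic x) := by
  rw [Set.image_preimage_eq_range_inter, range_ssetParam]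
  rfl

lemma ssetParam_injective (hγ : Function.Injective γ) (hwin : ∀ j j', γ j - γ j' < n) :
    Function.Injective (ssetParam n γ) := by
  rintro ⟨j, k⟩ ⟨j', k'⟩ h
  simp only [ssetParam] at h
  have hdvd : (n : ℤ) ∣ γ j - γ j' := ⟨k' - k, by linear_combination h⟩
  have hlt : |γ j - γ j'| < n := abs_sub_lt_iff.mpr ⟨hwin j j', hwin j' j⟩
  have hj : γ j = γ j' := sub_eq_zero.mp (Int.eq_zero_of_abs_lt_dvd hdvd hlt)
  have hn : (n : ℤ) ≠ 0 := by linarith [hwin j j]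
  rw [hj, add_right_inj, mul_left_inj' hn, Nat.cast_inj] at h
  rw [hγ hj, h]

lemma finite_ssetParam_preimage_Iic (hn : 0 < n) (x : ℤ) :
    (ssetParam n γ ⁻¹' Set.Iic x).Finite := by
  refine (Set.finite_univ.prod
    (Set.finite_Iic (Finset.univ.sup fun j ↦ (x - γ j).toNat))).subset ?_
  rintro ⟨j, k⟩ (hjk : γ j + k * n ≤ x)
  refine ⟨Set.mem_univ j, Set.mem_Iic.mpr (le_trans ?_ (Finset.le_sup (Finset.mem_univ j)))⟩
  have : (k : ℤ) ≤ k * n := le_mul_of_one_le_right (by positivity) (by exact_mod_cast hn)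
  omega

lemma finite_sep_sset_le (hn : 0 < n) (x : ℤ) : {s ∈ Sset n γ | s ≤ x}.Finite := by
  rw [sep_sset_le_eq_image]
  exact (finite_ssetParam_preimage_Iic hn x).image _

lemma ncard_sep_sset_le (hγ : Function.Injective γ) (hwin : ∀ j j', γ j - γ j' < n) (x : ℤ) :
    {s ∈ Sset n γ | s ≤ x}.ncard = (ssetParam n γ ⁻¹' Set.Iic x).ncard := by
  rw [sep_sset_le_eq_image, Set.ncard_image_of_injective _ (ssetParam_injective hγ hwin)]

lemma image_Iic_subset_sep_sset_le (hγ : Monotone γ) (l : Fin m) :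
    γ '' Set.Iic l ⊆ {s ∈ Sset n γ | s ≤ γ l} := by
  rintro _ ⟨j, hj, rfl⟩
  exact ⟨⟨j, 0, by simp⟩, hγ hj⟩

lemma sep_sset_le_subset_image_Iio (hγ : Monotone γ) (hwin : ∀ j j', γ j - γ j' < n)
    {l : Fin m} {y : ℤ} (hy : y < γ l) :
    {s ∈ Sset n γ | s ≤ y} ⊆ γ '' Set.Iio l := by
  rintro _ ⟨⟨j, k, rfl⟩, hs⟩
  have hk : k = 0 := by
    by_contra hk
    have hk1 : (1 : ℤ) ≤ k := by exact_mod_cast Nat.one_le_iff_ne_zero.mpr hk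
    have : (n : ℤ) ≤ k * n := le_mul_of_one_le_left (by positivity) hk1
    linarith [hwin l j]
  subst hk
  simp only [Nat.cast_zero, zero_mul, add_zero] at hs ⊢
  exact ⟨j, lt_of_not_ge fun hlj ↦ (hγ hlj).not_gt (hs.trans_lt hy), rfl⟩

end

theorem stmt0_general (m p : ℕ) (hp : 1 ≤ p) (n : ℕ) (hn : n = m + p)
    (α β : Fin m → ℤ) (hα : Idx n α) (hβ : Idx n β) :
    (∀ l, α l ≤ β l) ↔
      ∀ x : ℤ, ({s ∈ Sset n β | s ≤ x}).ncard ≤ ({s ∈ Sset n α | s ≤ x}).ncard := by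
  have hn0 : 0 < n := by omega
  have hαwin := hα.sub_lt hn0
  have hβwin := hβ.sub_lt hn0
  constructor
  · intro h x
    rw [ncard_sep_sset_le hα.2.1.injective hαwin, ncard_sep_sset_le hβ.2.1.injective hβwin]
    refine Set.ncard_le_ncard ?_ (finite_ssetParam_preimage_Iic hn0 x)
    rintro ⟨j, k⟩ (hjk : β j + k * n ≤ x)
    show α j + k * n ≤ x
    linarith [h j]
  · intro H l
    by_contra! hlt
    have hcount : (l : ℕ) + 1 ≤ l := calc
      (l : ℕ) + 1 = (β '' Set.Iic l).ncard := by
        rw [Set.ncard_image_of_injective _ hβ.2.1.injective, ← Finset.coe_Iic,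
          Set.ncard_coe_finset, Fin.card_Iic]
      _ ≤ {s ∈ Sset n β | s ≤ β l}.ncard :=
        Set.ncard_le_ncard (image_Iic_subset_sep_sset_le hβ.2.1.monotone l)
          (finite_sep_sset_le hn0 _)
      _ ≤ {s ∈ Sset n α | s ≤ β l}.ncard := H (β l)
      _ ≤ (α '' Set.Iio l).ncard :=
        Set.ncard_le_ncard (sep_sset_le_subset_image_Iio hα.2.1.monotone hαwin hlt)
      _ ≤ (Set.Iio l).ncard := Set.ncard_image_le
      _ = l := by rw [← Finset.coe_Iio, Set.ncard_coe_finset, Fin.card_Iio]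
    omega

/-- The componentwise order on `I(m,p)` coincides with the order defined by
comparing the increasing enumerations of the sets `S(α)`: `α ≤ β`
componentwise iff for every integer `x` the set `S(β)` has at most as many
elements `≤ x` as `S(α)` does. -/
theorem stmt0 (m p : ℕ) (hm : 1 ≤ m) (hp : 1 ≤ p) (n : ℕ) (hn : n = m + p)
    (α β : Fin m → ℤ) (hα : Idx n α) (hβ : Idx n β) :
    (∀ l, α l ≤ β l) ↔
      ∀ x : ℤ, ({s ∈ Sset n β | s ≤ x}).ncard ≤ ({s ∈ Sset n α | s ≤ x}).ncard :=
  stmt0_general m p hp n hn α β hα hβ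
end

section
/- For α, β ∈ I(m,p), α covers β in the componentwise order (that is, β < α and there is no γ ∈ I(m,p) with β < γ < α) if and only if there exists an index a ∈ {1,…,m} with β = α − e_a, where e_a is the a-th standard basis vector of ℤ^m. -/
/-- `α` covers `β` in `I(m,p)`: `β < α` and there is no `γ ∈ I(m,p)`
with `β < γ < α`. -/
def Covers (n : ℕ) {m : ℕ} (α β : Fin m → ℤ) : Prop :=
  β < α ∧ ∀ γ : Fin m → ℤ, Idx n γ → β < γ → ¬γ < α

lemma sub_single_one_covBy {ι : Type*} [DecidableEq ι] (α : ι → ℤ) (a : ι) :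
    α - Pi.single a 1 ⋖ α :=
  Pi.covBy_iff.2 ⟨a, by simp [Order.sub_one_covBy], fun j hj => by simp [hj]⟩

lemma covers_of_covBy {n m : ℕ} {α β : Fin m → ℤ} (h : β ⋖ α) : Covers n α β :=
  ⟨h.lt, fun _ _ hβγ hγα => h.2 hβγ hγα⟩

lemma StrictMono.monotone_sub_val {m : ℕ} {α : Fin m → ℤ} (h : StrictMono α) :
    Monotone fun k : Fin m => α k - k := by
  cases m with
  | zero => exact fun k => k.elim0
  | succ m =>
    refine Fin.monotone_iff_le_succ.2 fun i => ?_
    have := h (Fin.castSucc_lt_succ (i := i))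
    simp only [Fin.val_castSucc, Fin.val_succ, Nat.cast_add, Nat.cast_one]
    omega

lemma exists_last_lt_of_lt {m : ℕ} {α β : Fin m → ℤ} (h : β < α) :
    ∃ a, β a < α a ∧ ∀ l, a < l → β l = α l := by
  obtain ⟨i, hi⟩ := (Pi.lt_def.1 h).2
  obtain ⟨a, ha, hmax⟩ :=
    (Finset.univ.filter fun l => β l < α l).exists_max_image id ⟨i, by simpa using hi⟩
  refine ⟨a, (Finset.mem_filter.1 ha).2, fun l hal => ?_⟩
  by_contra hne
  exact (hmax l (by simpa using lt_of_le_of_ne (h.le l) hne)).not_gt hal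

lemma Idx.sub_single {n m : ℕ} {α : Fin m → ℤ} (hα : Idx n α) {b : Fin m} (hb : 2 ≤ α b)
    (hprev : ∀ k < b, α k + 1 < α b) (hnext : ∀ l, b < l → α l - α b + 1 < n) :
    Idx n (α - Pi.single b 1) := by
  obtain ⟨hpos, hmono, hwidth⟩ := hα
  have hγ (l : Fin m) : (α - Pi.single b 1 : Fin m → ℤ) l = α l - if l = b then 1 else 0 := by
    simp [Pi.single_apply]
  refine ⟨fun l => ?_, fun k l hkl => ?_, fun k l hkl => ?_⟩
  · have := hpos l
    rw [hγ]
    split_ifs <;> grind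
  · have := hmono hkl
    rw [hγ, hγ]
    split_ifs <;> grind
  · have := hwidth k l hkl
    rw [hγ, hγ]
    split_ifs <;> grind

lemma Idx.exists_sub_single_ge_of_lt {n m : ℕ} {α β : Fin m → ℤ} (hmn : m < n) (hα : Idx n α)
    (hβ : Idx n β) (hβα : β < α) :
    ∃ b, Idx n (α - Pi.single b 1) ∧ β ≤ α - Pi.single b 1 := by
  obtain ⟨a, hβa, hafter⟩ := exists_last_lt_of_lt hβα
  have hαrun := hα.2.1.monotone_sub_val
  have hβrun := hβ.2.1.monotone_sub_val
  -- `k ↦ α k - k` is monotone and constant exactly along runs of consecutive values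
  obtain ⟨b, hb, hbmin⟩ := (Finset.univ.filter fun k : Fin m => α k - k = α a - a).exists_min_image
    id ⟨a, by simp⟩
  simp only [Finset.mem_filter, Finset.mem_univ, true_and, id] at hb hbmin
  have hba : b ≤ a := hbmin a rfl
  have hβb : β b ≤ α b - 1 := by have := hβrun hba; simp only at this; omega
  refine ⟨b, hα.sub_single ?_ ?_ ?_, fun l => ?_⟩
  · have := hβ.1 b
    omega
  · intro k hkb
    have hle := hαrun hkb.le
    have hne : α k - k ≠ α a - a := fun h => (hbmin k h).not_gt hkb
    have : (k : ℕ) < b := hkb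
    simp only at hle
    omega
  · intro l hbl
    rcases le_or_gt l a with hla | hal
    · have := hαrun hla
      simp only at this
      have := l.isLt
      omega
    · have := hβ.2.2 b l hbl
      rw [hafter l hal] at this
      omega
  · by_cases hl : l = b
    · subst hl; simpa using hβb
    · simpa [hl] using hβα.le l

theorem stmt2_general (m p : ℕ) (hp : 1 ≤ p) (n : ℕ) (hn : n = m + p)
    (α β : Fin m → ℤ) (hα : Idx n α) (hβ : Idx n β) :
    Covers n α β ↔ ∃ a : Fin m, β = α - Pi.single a 1 := by
  constructor
  · rintro ⟨hβα, hcov⟩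
    obtain ⟨b, hγ, hβγ⟩ := hα.exists_sub_single_ge_of_lt (by omega) hβ hβα
    refine ⟨b, by_contra fun hne => ?_⟩
    exact hcov _ hγ (lt_of_le_of_ne hβγ hne) (sub_single_one_covBy α b).lt
  · rintro ⟨a, rfl⟩
    exact covers_of_covBy (sub_single_one_covBy α a)

/-- For `α, β ∈ I(m,p)`, `α` covers `β` in the componentwise order if and only
if `β = α - e_a` for some standard basis vector `e_a` of `ℤ^m`. -/
theorem stmt2 (m p : ℕ) (hm : 1 ≤ m) (hp : 1 ≤ p) (n : ℕ) (hn : n = m + p)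
    (α β : Fin m → ℤ) (hα : Idx n α) (hβ : Idx n β) :
    Covers n α β ↔ ∃ a : Fin m, β = α - Pi.single a 1 :=
  stmt2_general m p hp n hn α β hα hβ
end

section
/- Let f be an integer-valued function on m-tuples of integers satisfying: (i) f(α) = Σ_{a=1}^m f(α − e_a) for every α ∈ I(m,p) with α ≠ (1,2,…,m), where e_a is the a-th standard basis vector of ℤ^m; (ii) f(β) = 0 whenever β_k = β_l for some k ≠ l; (iii) f(β) = 0 whenever β_1 ≤ β_2 ≤ ⋯ ≤ β_m and β_m = β_1 + n; (iv) f(β) = 0 whenever 0 = β_1 < β_2 < ⋯ < β_m < n; (v) f((1,2,…,m)) = 1. Then f(α) = N(α) for every α ∈ I(m,p). In particular, the recurrence together with these boundary and initial conditions has a unique solution on I(m,p), namely the number of maximal chains below α. -/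
/-- `I_α = {β ∈ I(m,p) : β ≤ α}`. -/
def Ibelow (n : ℕ) {m : ℕ} (α : Fin m → ℤ) : Set (Fin m → ℤ) :=
  {β | Idx n β ∧ β ≤ α}

/-- `C` is a maximal totally ordered subset (maximal chain) of `S`. -/
def IsMaxChainIn {V : Type*} [Preorder V] (S C : Set V) : Prop :=
  C ⊆ S ∧ IsChain (· ≤ ·) C ∧
    ∀ C' : Set V, C' ⊆ S → IsChain (· ≤ ·) C' → C ⊆ C' → C' = C

/-- `N(α)` : the number of maximal chains of `I_α = {β ∈ I(m,p) : β ≤ α}`. -/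
noncomputable def Ncha (n : ℕ) {m : ℕ} (α : Fin m → ℤ) : ℕ :=
  {C : Set (Fin m → ℤ) | IsMaxChainIn (Ibelow n α) C}.ncard

open Set

section MaxChains

variable {V : Type*}

theorem IsChain.exists_isGreatest [PartialOrder V] {s : Set V} (hs : IsChain (· ≤ ·) s)
    (hfin : s.Finite) (hne : s.Nonempty) : ∃ b, IsGreatest s b := by
  obtain ⟨b, hb, hmax⟩ := hfin.exists_maximal hne
  refine ⟨b, hb, fun x hx => ?_⟩
  rcases eq_or_ne x b with rfl | hxb
  · exact le_rfl
  · exact (hs hx hb hxb).elim id fun h => hmax hx h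

theorem IsMaxChainIn.mem_of_forall_comparable [Preorder V] {S C : Set V} {x : V}
    (hC : IsMaxChainIn S C) (hx : x ∈ S) (hcomp : ∀ y ∈ C, x ≤ y ∨ y ≤ x) : x ∈ C := by
  have h := hC.2.2 (insert x C) (insert_subset hx hC.1)
    (hC.2.1.insert fun y hy _ => hcomp y hy) (subset_insert _ _)
  exact h ▸ mem_insert x C

theorem setOf_isMaxChainIn_singleton [Preorder V] (x : V) :
    {C | IsMaxChainIn {x} C} = {{x}} := by
  ext C
  refine ⟨fun hC => subset_antisymm hC.1 (singleton_subset_iff.2 ?_), ?_⟩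
  · exact hC.mem_of_forall_comparable rfl fun y hy => Or.inl (hC.1 hy).ge
  · rintro rfl
    exact ⟨subset_rfl, subsingleton_singleton.isChain, fun C' h _ h' => subset_antisymm h h'⟩

theorem finite_setOf_isMaxChainIn [Preorder V] {S : Set V} (hS : S.Finite) :
    {C | IsMaxChainIn S C}.Finite :=
  hS.finite_subsets.subset fun _ hC => hC.1

variable [PartialOrder V] {S C : Set V} {α β : V}

theorem IsMaxChainIn.mem_of_inter_Iic (hC : IsMaxChainIn (S ∩ Iic α) C) (hα : α ∈ S) :
    α ∈ C :=
  hC.mem_of_forall_comparable ⟨hα, le_rfl⟩ fun _ hy => Or.inr (hC.1 hy).2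

def CovByIn (S : Set V) (β α : V) : Prop :=
  β ∈ S ∧ β < α ∧ ∀ x ∈ S, β < x → ¬x < α

theorem IsMaxChainIn.insert_of_covByIn (h : CovByIn S β α) (hα : α ∈ S)
    (hC : IsMaxChainIn (S ∩ Iic β) C) : IsMaxChainIn (S ∩ Iic α) (insert α C) := by
  have hle : ∀ x ∈ C, x ≤ α := fun x hx => (hC.1 hx).2.trans h.2.1.le
  refine ⟨insert_subset ⟨hα, le_rfl⟩ fun x hx => ⟨(hC.1 hx).1, hle x hx⟩,
    hC.2.1.insert fun x hx _ => Or.inr (hle x hx), fun D hDS hD hCD => ?_⟩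
  have hβD : β ∈ D := hCD (mem_insert_of_mem _ (hC.mem_of_inter_Iic h.1))
  have hαC : α ∉ C := fun hαC => h.2.1.not_ge (hC.1 hαC).2
  have hDC : D \ {α} = C := by
    refine hC.2.2 _ (fun x hx => ⟨(hDS hx.1).1, ?_⟩) (hD.mono sdiff_subset)
      fun x hx => ⟨hCD (mem_insert_of_mem _ hx), fun hxα => hαC (hxα ▸ hx)⟩
    rcases eq_or_ne x β with rfl | hxβ
    · exact le_rfl
    · refine (hD hx.1 hβD hxβ).resolve_right fun hβx => h.2.2 x (hDS hx.1).1 ?_ ?_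
      · exact lt_of_le_of_ne hβx (Ne.symm hxβ)
      · exact lt_of_le_of_ne (hDS hx.1).2 hx.2
  rw [← hDC, insert_sdiff_singleton, insert_eq_of_mem (hCD (mem_insert _ _))]

theorem IsMaxChainIn.exists_isGreatest_diff_singleton (hC : IsMaxChainIn (S ∩ Iic α) C)
    (hfin : (S ∩ Iic α).Finite) (hx : ∃ x ∈ S, x < α) : ∃ b, IsGreatest (C \ {α}) b := by
  refine (hC.2.1.mono sdiff_subset).exists_isGreatest ((hfin.subset hC.1).sdiff) ?_
  by_contra hempty
  obtain ⟨x, hxS, hxα⟩ := hx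
  have hCα : ∀ y ∈ C, y = α := fun y hy => by_contra fun hyα => hempty ⟨y, hy, hyα⟩
  have hxC : x ∈ C :=
    hC.mem_of_forall_comparable ⟨hxS, hxα.le⟩ fun y hy => Or.inl (hCα y hy ▸ hxα.le)
  exact hempty ⟨x, hxC, hxα.ne⟩

theorem IsMaxChainIn.covByIn_of_isGreatest (hC : IsMaxChainIn (S ∩ Iic α) C)
    {b : V} (hb : IsGreatest (C \ {α}) b) : CovByIn S b α := by
  have hbα : b < α := lt_of_le_of_ne (hC.1 hb.1.1).2 hb.1.2
  refine ⟨(hC.1 hb.1.1).1, hbα, fun x hxS hbx hxα => hbx.not_ge (hb.2 ⟨?_, hxα.ne⟩)⟩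
  refine hC.mem_of_forall_comparable ⟨hxS, hxα.le⟩ fun y hy => ?_
  rcases eq_or_ne y α with rfl | hyα
  · exact Or.inl hxα.le
  · exact Or.inr ((hb.2 ⟨hy, hyα⟩).trans hbx.le)

theorem IsMaxChainIn.diff_singleton_of_isGreatest (hC : IsMaxChainIn (S ∩ Iic α) C)
    (hα : α ∈ S) {b : V} (hb : IsGreatest (C \ {α}) b) :
    IsMaxChainIn (S ∩ Iic b) (C \ {α}) := by
  have hbα : b < α := lt_of_le_of_ne (hC.1 hb.1.1).2 hb.1.2
  refine ⟨fun x hx => ⟨(hC.1 hx.1).1, hb.2 hx⟩, hC.2.1.mono sdiff_subset,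
    fun D hDS hD hCD => subset_antisymm (fun x hx => ⟨?_, ?_⟩) hCD⟩
  · have hDα : insert α D = C := by
      refine hC.2.2 _
        (insert_subset ⟨hα, le_rfl⟩ fun y hy => ⟨(hDS hy).1, (hDS hy).2.trans hbα.le⟩)
        (hD.insert fun y hy _ => Or.inr ((hDS hy).2.trans hbα.le)) fun y hy => ?_
      rcases eq_or_ne y α with rfl | hyα
      · exact mem_insert _ _
      · exact mem_insert_of_mem _ (hCD ⟨hy, hyα⟩)
    exact hDα ▸ mem_insert_of_mem _ hx
  · rintro rfl
    exact hbα.not_ge (hDS hx).2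

theorem setOf_isMaxChainIn_inter_Iic_eq_biUnion (hα : α ∈ S) (hfin : (S ∩ Iic α).Finite)
    (hx : ∃ x ∈ S, x < α) :
    {C | IsMaxChainIn (S ∩ Iic α) C} =
      ⋃ β ∈ {β | CovByIn S β α}, insert α '' {C | IsMaxChainIn (S ∩ Iic β) C} := by
  ext C
  simp only [mem_ofPred_eq, mem_iUnion, mem_image, exists_prop]
  constructor
  · intro hC
    obtain ⟨b, hb⟩ := hC.exists_isGreatest_diff_singleton hfin hx
    refine ⟨b, hC.covByIn_of_isGreatest hb, C \ {α}, hC.diff_singleton_of_isGreatest hα hb, ?_⟩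
    rw [insert_sdiff_singleton, insert_eq_of_mem (hC.mem_of_inter_Iic hα)]
  · rintro ⟨β, hβ, C', hC', rfl⟩
    exact hC'.insert_of_covByIn hβ hα

theorem ncard_setOf_isMaxChainIn_eq_finsum (hα : α ∈ S) (hfin : (S ∩ Iic α).Finite)
    (hx : ∃ x ∈ S, x < α) :
    {C | IsMaxChainIn (S ∩ Iic α) C}.ncard =
      ∑ᶠ β ∈ {β | CovByIn S β α}, {C | IsMaxChainIn (S ∩ Iic β) C}.ncard := by
  have hαC : ∀ β, CovByIn S β α → ∀ C, IsMaxChainIn (S ∩ Iic β) C → α ∉ C :=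
    fun β h C hC hαC => h.2.1.not_ge (hC.1 hαC).2
  -- `β` is the top of the chain `insert α C` once `α` is removed
  have hβ_le : ∀ β₁ ∈ {β | CovByIn S β α}, ∀ β₂ C₁ C₂, IsMaxChainIn (S ∩ Iic β₁) C₁ →
      IsMaxChainIn (S ∩ Iic β₂) C₂ → insert α C₁ = insert α C₂ → β₁ ≤ β₂ := by
    intro β₁ h₁ β₂ C₁ C₂ hC₁ hC₂ he
    have hmem : β₁ ∈ insert α C₂ := he ▸ mem_insert_of_mem _ (hC₁.mem_of_inter_Iic h₁.1)
    exact (hC₂.1 (hmem.resolve_left h₁.2.1.ne)).2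
  rw [setOf_isMaxChainIn_inter_Iic_eq_biUnion hα hfin hx, Finite.ncard_biUnion]
  · refine finsum_mem_congr rfl fun β hβ => InjOn.ncard_image fun C₁ h₁ C₂ h₂ he => ?_
    rw [← insert_sdiff_self_of_notMem (hαC β hβ C₁ h₁),
      ← insert_sdiff_self_of_notMem (hαC β hβ C₂ h₂), he]
  · exact hfin.subset fun β h => ⟨h.1, h.2.1.le⟩
  · refine fun β hβ => (finite_setOf_isMaxChainIn (hfin.subset ?_)).image _
    exact inter_subset_inter_right _ (Iic_subset_Iic.2 hβ.2.1.le)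
  · rintro β₁ h₁ β₂ h₂ hne
    refine disjoint_left.2 ?_
    rintro _ ⟨C₁, hC₁, rfl⟩ ⟨C₂, hC₂, he⟩
    exact hne (le_antisymm (hβ_le β₁ h₁ β₂ C₁ C₂ hC₁ hC₂ he.symm) (hβ_le β₂ h₂ β₁ C₂ C₁ hC₂ hC₁ he))

theorem eqOn_of_eq_finsum_covByIn {M : Type*} [AddCommMonoid M] {g h : V → M}
    (hfin : ∀ α ∈ S, (S ∩ Iic α).Finite)
    (hmin : ∀ α ∈ S, (∀ x ∈ S, ¬x < α) → g α = h α)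
    (hg : ∀ α ∈ S, (∃ x ∈ S, x < α) → g α = ∑ᶠ β ∈ {β | CovByIn S β α}, g β)
    (hh : ∀ α ∈ S, (∃ x ∈ S, x < α) → h α = ∑ᶠ β ∈ {β | CovByIn S β α}, h β) :
    EqOn g h S := by
  intro α hα
  induction hk : (S ∩ Iio α).ncard using Nat.strong_induction_on generalizing α with
  | _ k ih =>
  by_cases hx : ∃ x ∈ S, x < α
  · rw [hg α hα hx, hh α hα hx]
    refine finsum_mem_congr rfl fun β hβ => ih _ ?_ hβ.1 rfl
    rw [← hk]
    refine ncard_lt_ncard ⟨inter_subset_inter_right _ (Iio_subset_Iio hβ.2.1.le),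
      fun hsub => (hsub ⟨hβ.1, hβ.2.1⟩).2.false⟩
      ((hfin α hα).subset (inter_subset_inter_right _ Iio_subset_Iic_self))
  · exact hmin α hα fun x hxS hxα => hx ⟨x, hxS, hxα⟩

end MaxChains

section SubSingle

variable {ι : Type*} [DecidableEq ι] {α x : ι → ℤ} {a : ι}

theorem sub_single_one_apply (α : ι → ℤ) (a l : ι) :
    (α - Pi.single a 1 : ι → ℤ) l = α l - if l = a then 1 else 0 := by
  rw [Pi.sub_apply, Pi.single_apply]

theorem sub_single_lt : α - Pi.single a 1 < α :=
  sub_lt_self α (Pi.single_pos.2 one_pos)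

theorem sub_one_le_sub_single : α - 1 ≤ α - Pi.single a 1 := fun l => by
  rw [sub_single_one_apply, Pi.sub_apply, Pi.one_apply]
  split_ifs <;> simp

theorem sub_single_injective (α : ι → ℤ) : Function.Injective fun a => α - Pi.single a 1 := by
  intro a b h
  by_contra hab
  simpa [sub_single_one_apply, Ne.symm hab] using congr_fun h a

theorem eq_sub_single_of_le_of_lt (h₁ : α - Pi.single a 1 ≤ x) (h₂ : x < α) :
    x = α - Pi.single a 1 := by
  have hoff : ∀ l ≠ a, x l = α l := fun l hl =>
    le_antisymm (h₂.le l) (by simpa [sub_single_one_apply, hl] using h₁ l)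
  have ha : x a ≠ α a := fun hxa =>
    h₂.ne (funext fun l => if hl : l = a then hl ▸ hxa else hoff l hl)
  funext l
  have h₁l : (α - Pi.single a 1 : ι → ℤ) l ≤ x l := h₁ l
  rw [sub_single_one_apply] at h₁l ⊢
  split_ifs at h₁l ⊢ with hl
  · have : x l ≤ α l := h₂.le l
    subst hl
    omega
  · simpa using hoff l hl

end SubSingle

section Tuples

variable {m n : ℕ}

theorem StrictMono.sub_val_le_sub_val {β : Fin m → ℤ} (hβ : StrictMono β) {k l : Fin m}
    (hkl : k ≤ l) : β k - k ≤ β l - l := by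
  cases m with
  | zero => exact k.elim0
  | succ m =>
    refine (Fin.monotone_iff_le_succ (f := fun i => β i - i)).2 (fun i => ?_) hkl
    have := hβ (Fin.castSucc_lt_succ (i := i))
    simp only [Fin.val_castSucc, Fin.val_succ]
    push_cast
    omega

def minTuple (m : ℕ) : Fin m → ℤ := fun l => (l : ℤ) + 1

theorem Idx.minTuple_le {β : Fin m → ℤ} (hβ : Idx n β) : minTuple m ≤ β := fun l => by
  have h := hβ.2.1.sub_val_le_sub_val (show (⟨0, l.pos⟩ : Fin m) ≤ l from Nat.zero_le _)
  have := hβ.1 ⟨0, l.pos⟩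
  simp only at h
  simp only [minTuple]
  omega

theorem idx_minTuple (hmn : m < n) : Idx n (minTuple m) := by
  refine ⟨fun l => by simp [minTuple], fun k l hkl => by simpa [minTuple] using hkl,
    fun k l _ => ?_⟩
  simp only [minTuple]
  omega

theorem finite_setOf_idx_inter_Iic (α : Fin m → ℤ) : ({β | Idx n β} ∩ Iic α).Finite :=
  (finite_Icc 1 α).subset fun _ hβ => ⟨hβ.1.1, hβ.2⟩

theorem Ncha_minTuple (hmn : m < n) : Ncha n (minTuple m) = 1 := by
  have h : Ibelow n (minTuple m) = {minTuple m} :=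
    subset_antisymm (fun β hβ => le_antisymm hβ.2 hβ.1.minTuple_le)
      (singleton_subset_iff.2 ⟨idx_minTuple hmn, le_rfl⟩)
  rw [Ncha, h, setOf_isMaxChainIn_singleton, ncard_singleton]

theorem Idx.sub_single_one {α : Fin m → ℤ} {j : Fin m} (hα : Idx n α)
    (hpos : ∀ l, 1 ≤ (α - Pi.single j 1 : Fin m → ℤ) l) (hleft : ∀ k < j, α k + 1 < α j)
    (hright : ∀ l, j < l → α l - α j + 1 < n) : Idx n (α - Pi.single j 1) := by
  refine ⟨hpos, fun k l hkl => ?_, fun k l hkl => ?_⟩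
  · have := hα.2.1 hkl
    rw [sub_single_one_apply, sub_single_one_apply]
    by_cases hl : l = j
    · subst hl
      have := hleft k hkl
      split_ifs <;> omega
    · split_ifs <;> omega
  · have := hα.2.2 k l hkl
    rw [sub_single_one_apply, sub_single_one_apply]
    by_cases hk : k = j
    · subst hk
      have := hright l hkl
      split_ifs <;> omega
    · split_ifs <;> omega

theorem Idx.exists_sub_single_ge (hmn : m < n) {α β : Fin m → ℤ} (hα : Idx n α)
    (hβ : Idx n β) (hlt : β < α) :
    ∃ a, Idx n (α - Pi.single a 1) ∧ β ≤ α - Pi.single a 1 := by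
  have hne : ∃ i, β i < α i := by
    by_contra! h
    exact hlt.ne (le_antisymm hlt.le h)
  obtain ⟨a₀, ha₀, hmax⟩ := (toFinite {i | β i < α i}).exists_maximal hne
  have ha₀ : β a₀ < α a₀ := ha₀
  have hright : ∀ l, a₀ < l → β l = α l := fun l hl =>
    le_antisymm (hlt.le l) (not_lt.1 fun h => (hmax h hl.le).not_gt hl)
  -- `j` is the start of the run of consecutive values of `α` that ends at `a₀`
  obtain ⟨j, hj, hjmin⟩ := (toFinite {i | α a₀ - a₀ ≤ α i - i}).exists_minimal
    ⟨a₀, le_refl (α a₀ - a₀)⟩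
  have hj : α a₀ - a₀ ≤ α j - j := hj
  have hja : j ≤ a₀ := not_lt.1 fun h => (hjmin (le_refl (α a₀ - a₀)) h.le).not_gt h
  have hαj := hα.2.1.sub_val_le_sub_val hja
  have hβj := hβ.2.1.sub_val_le_sub_val hja
  have hle : ∀ l, β l ≤ (α - Pi.single j 1 : Fin m → ℤ) l := fun l => by
    have : β l ≤ α l := hlt.le l
    rw [sub_single_one_apply]
    split_ifs with hl
    · subst hl
      omega
    · omega
  refine ⟨j, hα.sub_single_one (fun l => (hβ.1 l).trans (hle l)) (fun k hk => ?_)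
    (fun l hl => ?_), hle⟩
  · have : ¬α a₀ - a₀ ≤ α k - k := fun h => (hjmin h hk.le).not_gt hk
    have := Fin.lt_def.1 hk
    omega
  · have := Fin.lt_def.1 hl
    by_cases hla : l ≤ a₀
    · have := hα.2.1.sub_val_le_sub_val hl.le
      have := hα.2.1.sub_val_le_sub_val hla
      have := l.isLt
      omega
    · have := hright l (not_le.1 hla)
      have := hβ.2.2 j l hl
      omega

theorem Idx.covByIn_iff (hmn : m < n) {α β : Fin m → ℤ} (hα : Idx n α) :
    CovByIn {β | Idx n β} β α ↔ ∃ a, Idx n (α - Pi.single a 1) ∧ α - Pi.single a 1 = β := by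
  constructor
  · rintro ⟨hβ, hlt, hcov⟩
    obtain ⟨a, ha, hle⟩ := exists_sub_single_ge hmn hα hβ hlt
    refine ⟨a, ha, (eq_or_lt_of_le hle).elim Eq.symm fun h => ?_⟩
    exact (hcov _ ha h sub_single_lt).elim
  · rintro ⟨a, ha, rfl⟩
    exact ⟨ha, sub_single_lt, fun x _ hx hxα => hx.ne' (eq_sub_single_of_le_of_lt hx.le hxα)⟩

open Classical in
theorem Idx.finsum_covByIn {M : Type*} [AddCommMonoid M] (hmn : m < n) {α : Fin m → ℤ}
    (hα : Idx n α) (g : (Fin m → ℤ) → M) :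
    ∑ᶠ β ∈ {β | CovByIn {β | Idx n β} β α}, g β =
      ∑ a with Idx n (α - Pi.single a 1), g (α - Pi.single a 1) := by
  have h : {β | CovByIn {β | Idx n β} β α} = (fun a => α - Pi.single a 1) ''
      ↑(Finset.univ.filter fun a => Idx n (α - Pi.single a 1)) := by
    ext β
    simp [hα.covByIn_iff hmn]
  rw [h, finsum_mem_image (sub_single_injective α).injOn, finsum_mem_coe_finset]

theorem Idx.boundary_of_not_idx (hm : 0 < m) (hn : 0 < n) {α β : Fin m → ℤ} (hα : Idx n α)
    (h₁ : α - 1 ≤ β) (h₂ : β ≤ α) (hβ : ¬Idx n β) :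
    (∃ k l : Fin m, k ≠ l ∧ β k = β l) ∨
    (Monotone β ∧ β ⟨m - 1, by omega⟩ = β ⟨0, hm⟩ + n) ∨
    (β ⟨0, hm⟩ = 0 ∧ StrictMono β ∧ β ⟨m - 1, by omega⟩ < n) := by
  have h₁ : ∀ l, α l - 1 ≤ β l := fun l => by simpa using h₁ l
  have hmono : Monotone β := fun k l hkl => by
    rcases hkl.lt_or_eq with hkl | rfl
    · have := hα.2.1 hkl
      have := h₁ l
      have : β k ≤ α k := h₂ k
      omega
    · exact le_rfl
  set first : Fin m := ⟨0, hm⟩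
  set last : Fin m := ⟨m - 1, by omega⟩
  have hfirst : ∀ l, first ≤ l := fun l => Nat.zero_le _
  have hlast : ∀ l, l ≤ last := fun l => Nat.le_sub_one_of_lt l.isLt
  have := h₁ first
  by_cases hsm : StrictMono β
  swap
  · left
    obtain ⟨k, l, he, hne⟩ := Function.not_injective_iff.1 fun hinj =>
      hsm (hmono.strictMono_iff_injective.2 hinj)
    exact ⟨k, l, hne, he⟩
  by_cases hspread : ∀ k l : Fin m, k < l → β l - β k < n
  · right; right
    obtain ⟨l, hl⟩ : ∃ l, β l < 1 := by
      by_contra! h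
      exact hβ ⟨h, hsm, hspread⟩
    have hβ0 : β first = 0 := by
      have := hmono (hfirst l)
      have := hα.1 first
      omega
    refine ⟨hβ0, hsm, ?_⟩
    rcases (hlast first).lt_or_eq with hfl | hfl
    · have := hspread first last hfl
      omega
    · rw [← hfl, hβ0]
      exact_mod_cast hn
  · right; left
    push Not at hspread
    obtain ⟨k, l, hkl, hkln⟩ := hspread
    have := hα.2.2 first last ((hfirst k).trans_lt (hkl.trans_le (hlast l)))
    have := hmono (hfirst k)
    have := hmono (hlast l)
    have : β last ≤ α last := h₂ last
    exact ⟨hmono, by omega⟩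

end Tuples

/-- The Pieri recurrence together with the boundary conditions (vanishing on
tuples with a repeated entry, on weakly increasing tuples with
`β_m = β_1 + n`, and on strictly increasing tuples `0 = β_1 < ⋯ < β_m < n`)
and the initial condition `f(1,…,m) = 1` determines `f` uniquely on `I(m,p)`:
its value is the number `N(α)` of maximal chains below `α`. -/
theorem stmt5 (m p : ℕ) (hm : 1 ≤ m) (hp : 1 ≤ p) (n : ℕ) (hn : n = m + p)
    (f : (Fin m → ℤ) → ℤ)
    (hrec : ∀ α : Fin m → ℤ, Idx n α → α ≠ (fun l : Fin m => (l : ℤ) + 1) →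
      f α = ∑ a : Fin m, f (α - Pi.single a 1))
    (hbound1 : ∀ β : Fin m → ℤ, (∃ k l : Fin m, k ≠ l ∧ β k = β l) → f β = 0)
    (hbound2 : ∀ β : Fin m → ℤ, Monotone β →
      β ⟨m - 1, by omega⟩ = β ⟨0, by omega⟩ + n → f β = 0)
    (hini2 : ∀ β : Fin m → ℤ, β ⟨0, by omega⟩ = 0 → StrictMono β →
      β ⟨m - 1, by omega⟩ < n → f β = 0)
    (hini1 : f (fun l : Fin m => (l : ℤ) + 1) = 1) :
    ∀ α : Fin m → ℤ, Idx n α → f α = (Ncha n α : ℤ) := by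
  have hmn : m < n := by omega
  have hNrec : ∀ α ∈ {β : Fin m → ℤ | Idx n β}, (∃ x ∈ {β | Idx n β}, x < α) →
      (Ncha n α : ℤ) = ∑ᶠ β ∈ {β | CovByIn {β | Idx n β} β α}, (Ncha n β : ℤ) := by
    intro α hα hx
    rw [← Nat.cast_finsum_mem ((finite_setOf_idx_inter_Iic α).subset fun β h => ⟨h.1, h.2.1.le⟩)]
    exact congrArg _ (ncard_setOf_isMaxChainIn_eq_finsum hα (finite_setOf_idx_inter_Iic α) hx)
  have hfrec : ∀ α ∈ {β : Fin m → ℤ | Idx n β}, (∃ x ∈ {β | Idx n β}, x < α) →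
      f α = ∑ᶠ β ∈ {β | CovByIn {β | Idx n β} β α}, f β := by
    classical
    rintro α hα ⟨x, hx, hxα⟩
    rw [hrec α hα (hx.minTuple_le.trans_lt hxα).ne', Idx.finsum_covByIn hmn hα,
      Finset.sum_filter_of_ne fun a _ hfa => by_contra fun ha => hfa ?_]
    rcases Idx.boundary_of_not_idx (by omega) (by omega) hα sub_one_le_sub_single
      sub_single_lt.le ha with h | h | h
    exacts [hbound1 _ h, hbound2 _ h.1 h.2, hini2 _ h.1 h.2.1 h.2.2]
  refine fun α hα => eqOn_of_eq_finsum_covByIn (fun α _ => finite_setOf_idx_inter_Iic α)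
    (fun α hα hmin => ?_) hfrec hNrec hα
  obtain rfl : minTuple m = α :=
    hα.minTuple_le.lt_or_eq.resolve_left (hmin _ (idx_minTuple hmn))
  rw [Ncha_minTuple hmn]
  exact_mod_cast hini1
end

section
/- The assignment (i, d) ↦ (i;d) is a bijection from the set of pairs (i, d), where i = (i_1,…,i_m) is an integer tuple with 1 ≤ i_1 < ⋯ < i_m ≤ n and d ≥ 0 is an integer, onto I(m,p). Moreover Σ_{l=1}^m ((i;d)_l − l) = nd + Σ_{j=1}^m (i_j − j). -/
/-- `1 ≤ i_1 < ⋯ < i_m ≤ n`. -/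
def IdxGr (n : ℕ) {m : ℕ} (i : Fin m → ℤ) : Prop :=
  (∀ l, 1 ≤ i l) ∧ StrictMono i ∧ ∀ l, i l ≤ n

/-- The index `(i;d)` : writing `d = k*m + r` with `0 ≤ r < m`,
`(i;d)_l = k*n + i_{l+r}` for `l ≤ m - r` and `(i;d)_l = (k+1)*n + i_{l-m+r}`
for `l > m - r` (zero-based indexing here). -/
def semi (n : ℕ) {m : ℕ} (i : Fin m → ℤ) (d : ℕ) : Fin m → ℤ := fun l =>
  if h : (l : ℕ) + d % m < m then
    (d / m : ℤ) * n + i ⟨(l : ℕ) + d % m, h⟩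
  else
    ((d / m : ℤ) + 1) * n +
      i ⟨(l : ℕ) + d % m - m, by
        have hl := l.2
        have hmod : d % m < m := Nat.mod_lt d (by omega)
        omega⟩

/-!
Write `m = k + 1`. The tuple `(i;d)` is the window `[d, d + m)` of the periodic extension
`x ↦ ⌊x/m⌋·n + i_{x mod m}` of `i`, so `(i;d+1) = σ (i;d)` for the cyclic shift
`σ β = (β₂, …, β_m, β₁ + n)`, and `(i;d) = σ^d i`. The shift preserves `I(m,p)`, raises
`Σ β` by `n`, and is invertible with inverse `α ↦ (α_m - n, α₁, …, α_{m-1})`, which again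
lies in `I(m,p)` when `α_m > n`. An element of `I(m,p)` with `α_m ≤ n` is itself an admissible
`i`; otherwise unshifting lowers `Σ α`, which gives surjectivity by induction. Injectivity holds
because `σ β` has last entry `β₁ + n > n`, so a nontrivial power of `σ` never lands on an
admissible `i`.
-/

variable {k : ℕ} (n : ℕ)

def periodicExt (i : Fin (k + 1) → ℤ) (x : ℕ) : ℤ :=
  ((x / (k + 1) : ℕ) : ℤ) * n + i (Fin.ofNat (k + 1) x)

theorem periodicExt_add_period (i : Fin (k + 1) → ℤ) (x : ℕ) :
    periodicExt n i (x + (k + 1)) = periodicExt n i x + n := by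
  have hq : (x + (k + 1)) / (k + 1) = x / (k + 1) + 1 := Nat.add_div_right x k.succ_pos
  have hr : Fin.ofNat (k + 1) (x + (k + 1)) = Fin.ofNat (k + 1) x :=
    Fin.ext (by simp only [Fin.val_ofNat, Nat.add_mod_right])
  rw [periodicExt, periodicExt, hq, hr]
  push_cast
  ring

theorem semi_apply_eq_periodicExt (i : Fin (k + 1) → ℤ) (d : ℕ) (l : Fin (k + 1)) :
    semi n i d l = periodicExt n i (d + l) := by
  have hd := Nat.div_add_mod d (k + 1)
  have hpos : 0 < k + 1 := k.succ_pos
  have hr := Nat.mod_lt d hpos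
  have hl := l.isLt
  unfold semi periodicExt
  split_ifs with h
  · obtain ⟨hq, hr'⟩ : (d + l) / (k + 1) = d / (k + 1) ∧ (d + l) % (k + 1) = l + d % (k + 1) :=
      (Nat.div_mod_unique hpos).2 ⟨by omega, h⟩
    rw [hq, ← Int.natCast_div]
    congr 2
    ext
    rw [Fin.val_ofNat, hr']
  · obtain ⟨hq, hr'⟩ : (d + l) / (k + 1) = d / (k + 1) + 1 ∧
        (d + l) % (k + 1) = l + d % (k + 1) - (k + 1) :=
      (Nat.div_mod_unique hpos).2 ⟨by rw [Nat.mul_succ]; omega, by omega⟩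
    rw [hq, ← Int.natCast_div]
    push_cast
    congr 2
    ext
    rw [Fin.val_ofNat, hr']

theorem semi_zero (i : Fin (k + 1) → ℤ) : semi n i 0 = i := by
  funext l
  rw [semi_apply_eq_periodicExt, periodicExt, zero_add, Nat.div_eq_of_lt l.isLt]
  simp

def cycleShift (β : Fin (k + 1) → ℤ) : Fin (k + 1) → ℤ :=
  Fin.snoc (Fin.tail β) (β 0 + n)

def cycleUnshift (α : Fin (k + 1) → ℤ) : Fin (k + 1) → ℤ :=
  Fin.cons (α (Fin.last k) - n) (Fin.init α)

theorem cycleShift_cycleUnshift (α : Fin (k + 1) → ℤ) :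
    cycleShift n (cycleUnshift n α) = α := by
  funext l
  induction l using Fin.lastCases <;> simp [cycleShift, cycleUnshift, Fin.init]

theorem cycleUnshift_cycleShift (β : Fin (k + 1) → ℤ) :
    cycleUnshift n (cycleShift n β) = β := by
  funext l
  induction l using Fin.cases <;> simp [cycleShift, cycleUnshift, Fin.tail]

theorem cycleShift_injective : Function.Injective (cycleShift (k := k) n) :=
  Function.LeftInverse.injective (cycleUnshift_cycleShift n)

theorem sum_cycleShift (β : Fin (k + 1) → ℤ) :
    ∑ l, cycleShift n β l = ∑ l, β l + n := by
  rw [Fin.sum_univ_castSucc, Fin.sum_univ_succ β]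
  simp only [cycleShift, Fin.snoc_castSucc, Fin.snoc_last, Fin.tail]
  ring

theorem semi_succ (i : Fin (k + 1) → ℤ) (d : ℕ) :
    semi n i (d + 1) = cycleShift n (semi n i d) := by
  funext l
  induction l using Fin.lastCases with
  | last =>
    rw [cycleShift, Fin.snoc_last, semi_apply_eq_periodicExt, semi_apply_eq_periodicExt,
      ← periodicExt_add_period]
    congr 1
    rw [Fin.val_last, Fin.val_zero]
    omega
  | cast j =>
    rw [cycleShift, Fin.snoc_castSucc, Fin.tail, semi_apply_eq_periodicExt,
      semi_apply_eq_periodicExt]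
    congr 1
    rw [Fin.val_castSucc, Fin.val_succ]
    omega

theorem semi_eq_iterate (i : Fin (k + 1) → ℤ) (d : ℕ) :
    semi n i d = (cycleShift n)^[d] i := by
  induction d with
  | zero => exact semi_zero n i
  | succ d ih => rw [semi_succ, ih, Function.iterate_succ_apply']

theorem sum_semi (i : Fin (k + 1) → ℤ) (d : ℕ) :
    ∑ l, semi n i d l = n * d + ∑ l, i l := by
  induction d with
  | zero => simp [semi_zero]
  | succ d ih => rw [semi_succ, sum_cycleShift, ih]; push_cast; ring

variable {n}

theorem idx_iff {m : ℕ} {α : Fin m → ℤ} :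
    Idx n α ↔ (∀ l, 1 ≤ α l) ∧ ∀ a b, a < b → α a < α b ∧ α b - α a < n :=
  ⟨fun ⟨hpos, hmono, hspread⟩ => ⟨hpos, fun a b hab => ⟨hmono hab, hspread a b hab⟩⟩,
    fun ⟨hpos, hwin⟩ => ⟨hpos, fun _ _ hab => (hwin _ _ hab).1, fun _ _ hab => (hwin _ _ hab).2⟩⟩

theorem Idx.cycleShift {β : Fin (k + 1) → ℤ} (hβ : Idx n β) : Idx n (cycleShift n β) := by
  obtain ⟨hpos, hwin⟩ := idx_iff.1 hβ
  refine idx_iff.2 ⟨fun l => ?_, fun a b hab => ?_⟩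
  · induction l using Fin.lastCases
    · simp only [_root_.cycleShift, Fin.snoc_last]
      linarith [hpos 0, (n.cast_nonneg : (0 : ℤ) ≤ n)]
    · simpa only [_root_.cycleShift, Fin.snoc_castSucc, Fin.tail] using hpos _
  induction a using Fin.lastCases with
  | last => exact absurd hab (Fin.le_last b).not_gt
  | cast a =>
    induction b using Fin.lastCases with
    | last =>
      have := hwin 0 a.succ a.succ_pos
      simp only [_root_.cycleShift, Fin.snoc_castSucc, Fin.snoc_last, Fin.tail]
      constructor <;> linarith
    | cast b =>
      simpa only [_root_.cycleShift, Fin.snoc_castSucc, Fin.tail] using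
        hwin _ _ (Fin.succ_lt_succ_iff.2 (Fin.castSucc_lt_castSucc_iff.1 hab))

theorem Idx.cycleUnshift {α : Fin (k + 1) → ℤ} (hα : Idx n α) (hlast : n < α (Fin.last k)) :
    Idx n (cycleUnshift n α) := by
  obtain ⟨hpos, hwin⟩ := idx_iff.1 hα
  refine idx_iff.2 ⟨fun l => ?_, fun a b hab => ?_⟩
  · induction l using Fin.cases
    · simp only [_root_.cycleUnshift, Fin.cons_zero]
      linarith
    · exact hpos _
  induction b using Fin.cases with
  | zero => exact absurd hab (Fin.zero_le a).not_gt
  | succ b =>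
    induction a using Fin.cases with
    | zero =>
      have := hwin _ _ (Fin.castSucc_lt_last b)
      simp only [_root_.cycleUnshift, Fin.cons_zero, Fin.cons_succ, Fin.init]
      constructor <;> linarith
    | succ a =>
      simpa only [_root_.cycleUnshift, Fin.cons_succ, Fin.init] using
        hwin _ _ (Fin.castSucc_lt_castSucc_iff.2 (Fin.succ_lt_succ_iff.1 hab))

theorem IdxGr.idx {m : ℕ} {i : Fin m → ℤ} (hi : IdxGr n i) : Idx n i :=
  ⟨hi.1, hi.2.1, fun a b _ => by linarith [hi.1 a, hi.2.2 b]⟩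

theorem Idx.idxGr {α : Fin (k + 1) → ℤ} (hα : Idx n α) (hlast : α (Fin.last k) ≤ n) :
    IdxGr n α :=
  ⟨hα.1, hα.2.1, fun l => (hα.2.1.monotone (Fin.le_last l)).trans hlast⟩

theorem idx_semi {i : Fin (k + 1) → ℤ} (hi : IdxGr n i) (d : ℕ) : Idx n (semi n i d) := by
  induction d with
  | zero => rw [semi_zero]; exact hi.idx
  | succ d ih => rw [semi_succ]; exact ih.cycleShift

theorem eq_and_eq_of_semi_eq {i i' : Fin (k + 1) → ℤ} {d d' : ℕ} (hi : IdxGr n i)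
    (hi' : IdxGr n i') (h : semi n i d = semi n i' d') : i = i' ∧ d = d' := by
  wlog hd : d ≤ d' generalizing i i' d d'
  · obtain ⟨h₁, h₂⟩ := this hi' hi h.symm (le_of_not_ge hd)
    exact ⟨h₁.symm, h₂.symm⟩
  obtain ⟨e, rfl⟩ := Nat.exists_eq_add_of_le hd
  rw [semi_eq_iterate, semi_eq_iterate, Function.iterate_add_apply] at h
  have hi_eq : i = (cycleShift n)^[e] i' := (cycleShift_injective n).iterate d h
  cases e with
  | zero => exact ⟨hi_eq, rfl⟩
  | succ e =>
    have hlast := hi.2.2 (Fin.last k)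
    rw [hi_eq, Function.iterate_succ_apply', ← semi_eq_iterate, _root_.cycleShift,
      Fin.snoc_last] at hlast
    linarith [(idx_semi hi' e).1 0]

theorem exists_semi_eq (hn : 0 < n) {α : Fin (k + 1) → ℤ} (hα : Idx n α) :
    ∃ i d, IdxGr n i ∧ semi n i d = α := by
  induction hs : (∑ l, α l).toNat using Nat.strong_induction_on generalizing α with
  | _ s ih =>
    by_cases hlast : α (Fin.last k) ≤ n
    · exact ⟨α, 0, hα.idxGr hlast, semi_zero n α⟩
    have hα' := hα.cycleUnshift (not_le.1 hlast)
    have hsum := sum_cycleShift n (cycleUnshift n α)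
    rw [cycleShift_cycleUnshift] at hsum
    have hnonneg : 0 ≤ ∑ l, cycleUnshift n α l :=
      Finset.sum_nonneg fun l _ => zero_le_one.trans (hα'.1 l)
    obtain ⟨i, d, hi, hd⟩ := ih _ (by omega) hα' rfl
    exact ⟨i, d + 1, hi, by rw [semi_succ, hd, cycleShift_cycleUnshift]⟩

theorem stmt6_general (m p : ℕ) (hm : 1 ≤ m) (n : ℕ) (hn : n = m + p) :
    (∀ (i : Fin m → ℤ) (d : ℕ), IdxGr n i →
        Idx n (semi n i d) ∧
        ∑ l : Fin m, (semi n i d l - ((l : ℤ) + 1)) =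
          (n : ℤ) * d + ∑ j : Fin m, (i j - ((j : ℤ) + 1))) ∧
    (∀ (i i' : Fin m → ℤ) (d d' : ℕ), IdxGr n i → IdxGr n i' →
        semi n i d = semi n i' d' → i = i' ∧ d = d') ∧
    (∀ α : Fin m → ℤ, Idx n α → ∃ (i : Fin m → ℤ) (d : ℕ),
        IdxGr n i ∧ semi n i d = α) := by
  obtain ⟨k, rfl⟩ : ∃ k, m = k + 1 := ⟨m - 1, by omega⟩
  refine ⟨fun i d hi => ⟨idx_semi hi d, ?_⟩,
    fun _ _ _ _ hi hi' h => eq_and_eq_of_semi_eq hi hi' h, fun _ hα => exists_semi_eq (by omega) hα⟩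
  rw [Finset.sum_sub_distrib, Finset.sum_sub_distrib, sum_semi]
  ring

/-- The assignment `(i, d) ↦ (i;d)` is a bijection from pairs
(`1 ≤ i_1 < ⋯ < i_m ≤ n`, `d ≥ 0`) onto `I(m,p)`, and
`|(i;d)| = n·d + |i|` where `|α| = Σ_l (α_l - l)`. -/
theorem stmt6 (m p : ℕ) (hm : 1 ≤ m) (hp : 1 ≤ p) (n : ℕ) (hn : n = m + p) :
    (∀ (i : Fin m → ℤ) (d : ℕ), IdxGr n i →
        Idx n (semi n i d) ∧
        ∑ l : Fin m, (semi n i d l - ((l : ℤ) + 1)) =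
          (n : ℤ) * d + ∑ j : Fin m, (i j - ((j : ℤ) + 1))) ∧
    (∀ (i i' : Fin m → ℤ) (d d' : ℕ), IdxGr n i → IdxGr n i' →
        semi n i d = semi n i' d' → i = i' ∧ d = d') ∧
    (∀ α : Fin m → ℤ, Idx n α → ∃ (i : Fin m → ℤ) (d : ℕ),
        IdxGr n i ∧ semi n i d = α) :=
  stmt6_general m p hm n hn
end

section
/- Pieri-type identity for alternants: let R be a commutative ring, m ≥ 1, q_1, …, q_m ∈ R and c_1, …, c_m ∈ ℕ. Then (q_1 + ⋯ + q_m) · det[(q_k^{c_j})_{1≤k,j≤m}] = Σ_{a=1}^m det[(q_k^{c_j + δ_{ja}})_{1≤k,j≤m}], where δ_{ja} = 1 if j = a and 0 otherwise (i.e. the a-th summand is the same determinant with the exponent in column a increased by 1). -/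
theorem Finset.sum_mul_prod_pow_eq_sum_prod_pow_add_ite {ι R : Type*} [CommSemiring R]
    [Fintype ι] [DecidableEq ι] (f : ι → R) (c : ι → ℕ) :
    (∑ i, f i) * ∏ j, f j ^ c j = ∑ i, ∏ j, f j ^ (c j + if j = i then 1 else 0) := by
  rw [Finset.sum_mul]
  refine Finset.sum_congr rfl fun i _ => ?_
  simp only [pow_add, Finset.prod_mul_distrib, pow_ite, pow_one, pow_zero,
    Finset.prod_ite_eq', Finset.mem_univ, if_true]
  ring

theorem stmt7_general (R : Type*) [CommRing R] (m : ℕ)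
    (q : Fin m → R) (c : Fin m → ℕ) :
    (∑ k : Fin m, q k) *
        Matrix.det (Matrix.of fun k j : Fin m => q k ^ c j) =
      ∑ a : Fin m,
        Matrix.det (Matrix.of fun k j : Fin m =>
          q k ^ (c j + if j = a then 1 else 0)) := by
  simp only [Matrix.det_apply', Matrix.of_apply, Finset.mul_sum]
  rw [Finset.sum_comm]
  refine Finset.sum_congr rfl fun σ _ => ?_
  rw [mul_left_comm, ← Equiv.sum_comp σ q, Finset.sum_mul_prod_pow_eq_sum_prod_pow_add_ite,
    Finset.mul_sum]

/-- Pieri-type identity for alternants over a commutative ring: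
`(q_1 + ⋯ + q_m) · det[q_k^{c_j}] = Σ_a det[q_k^{c_j + δ_{ja}}]`. -/
theorem stmt7 (R : Type*) [CommRing R] (m : ℕ) (hm : 1 ≤ m)
    (q : Fin m → R) (c : Fin m → ℕ) :
    (∑ k : Fin m, q k) *
        Matrix.det (Matrix.of fun k j : Fin m => q k ^ c j) =
      ∑ a : Fin m,
        Matrix.det (Matrix.of fun k j : Fin m =>
          q k ^ (c j + if j = a then 1 else 0)) :=
  stmt7_general R m q c
end

section
/- In the polynomial ring ℤ[X_1, …, X_m], for every injective function c : {1,…,m} → ℕ the Vandermonde product ∏_{1≤k<l≤m}(X_k − X_l) divides the alternant det[(X_k^{c_j})_{1≤k,j≤m}]. (This is the divisibility underlying Jacobi's bialternant expression for the Schur function s_μ = det[q_i^{μ_j+m−j}]/det[q_i^{m−j}].) -/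
/-!
Every `X a - X b` with `a ≠ b` divides the alternant: substituting `X a` for `X b` makes two of its
rows equal, and a polynomial killed by that substitution is divisible by `X a - X b`, because the
substitution is the identity modulo `X a - X b`. Over a domain each `X a - X b` is prime, being
`-(X - C (X a))` as a polynomial in `X b` over the remaining variables, and for `a < b` no two of
them divide one another, so their product divides the alternant as well.
-/

open MvPolynomial

theorem Finset.prod_dvd_of_prime_of_dvd {M₀ ι : Type*} [CommMonoidWithZero M₀]
    [IsCancelMulZero M₀] {s : Finset ι} {f : ι → M₀} {n : M₀} (hprime : ∀ i ∈ s, Prime (f i))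
    (hndvd : (s : Set ι).Pairwise fun i j => ¬f i ∣ f j) (hdvd : ∀ i ∈ s, f i ∣ n) :
    ∏ i ∈ s, f i ∣ n := by
  induction s using Finset.cons_induction generalizing n with
  | empty => simp
  | cons a s ha ih =>
    obtain ⟨k, rfl⟩ := hdvd a (mem_cons_self a s)
    rw [prod_cons]
    refine mul_dvd_mul_left _ (ih (fun i hi => hprime i (mem_cons_of_mem hi))
      (hndvd.mono (by simp)) fun i hi => ?_)
    have hia : ¬f i ∣ f a := hndvd (by simp [hi]) (by simp) (by rintro rfl; exact ha hi)
    have hik : f i ∣ f a * k := hdvd i (mem_cons_of_mem hi)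
    exact ((hprime i (mem_cons_of_mem hi)).dvd_or_dvd hik).resolve_left hia

namespace MvPolynomial

variable {R σ : Type*} [CommRing R]

theorem X_sub_X_dvd_iff_rename_update_eq_zero [DecidableEq σ] (a b : σ) {p : MvPolynomial σ R} :
    X a - X b ∣ p ↔ rename (Function.update id b a) p = 0 := by
  constructor
  · rintro ⟨q, rfl⟩
    simp [Function.update_apply]
  · intro hp
    set I := Ideal.span {(X a - X b : MvPolynomial σ R)}
    have hmk : (Ideal.Quotient.mkₐ R I).comp (rename (Function.update id b a)) =
        Ideal.Quotient.mkₐ R I := by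
      refine algHom_ext fun i => ?_
      rcases eq_or_ne i b with rfl | hi
      · simp [Ideal.Quotient.eq, I]
      · simp [Function.update_of_ne hi]
    rw [← Ideal.mem_span_singleton, ← Ideal.Quotient.eq_zero_iff_mem]
    simpa [hp] using (congrArg (· p) hmk).symm

theorem prime_X_sub_X [IsDomain R] {a b : σ} (hab : a ≠ b) :
    Prime (X a - X b : MvPolynomial σ R) := by
  classical
  let e := (renameEquiv R (Equiv.optionSubtypeNe b)).symm.trans (optionEquivLeft R _)
  have he : e (X a - X b) = -(Polynomial.X - Polynomial.C (X ⟨a, hab⟩)) := by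
    simp [e, Equiv.optionSubtypeNe_symm_of_ne hab, optionEquivLeft_X_some,
      optionEquivLeft_X_none]
  rw [← MulEquiv.prime_iff e.toMulEquiv]
  exact he ▸ (Polynomial.prime_X_sub_C _).neg

theorem eq_and_eq_of_X_sub_X_dvd_X_sub_X [Nontrivial R] [LinearOrder σ] {a b k l : σ}
    (hab : a < b) (hkl : k < l) (h : (X a - X b : MvPolynomial σ R) ∣ X k - X l) :
    a = k ∧ b = l := by
  rw [X_sub_X_dvd_iff_rename_update_eq_zero, map_sub, rename_X, rename_X, sub_eq_zero,
    X_injective.eq_iff] at h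
  grind [Function.update_apply]

theorem X_sub_X_dvd_det_alternant [Fintype σ] [DecidableEq σ] {a b : σ} (hab : a ≠ b)
    (c : σ → ℕ) :
    (X a - X b : MvPolynomial σ R) ∣ (Matrix.of fun k j => (X k : MvPolynomial σ R) ^ c j).det := by
  rw [X_sub_X_dvd_iff_rename_update_eq_zero, AlgHom.map_det]
  refine Matrix.det_zero_of_row_eq hab ?_
  ext j
  simp [Function.update_of_ne hab]

end MvPolynomial

theorem stmt9_general (m : ℕ) (c : Fin m → ℕ) :
    (∏ k : Fin m, ∏ l ∈ Finset.Ioi k,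
        ((X k : MvPolynomial (Fin m) ℤ) - X l)) ∣
      Matrix.det (Matrix.of fun k j : Fin m =>
        (X k : MvPolynomial (Fin m) ℤ) ^ c j) := by
  have hlt : ∀ p ∈ Finset.univ.sigma (Finset.Ioi (α := Fin m)), p.1 < p.2 := by simp
  rw [Finset.prod_sigma']
  refine Finset.prod_dvd_of_prime_of_dvd (fun p hp => prime_X_sub_X (hlt p hp).ne) ?_
    fun p hp => X_sub_X_dvd_det_alternant (hlt p hp).ne c
  rintro ⟨a, b⟩ hab ⟨k, l⟩ hkl hne hdvd
  obtain ⟨rfl, rfl⟩ := eq_and_eq_of_X_sub_X_dvd_X_sub_X (hlt _ hab) (hlt _ hkl) hdvd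
  exact hne rfl

/-- In `ℤ[X_1, …, X_m]`, the Vandermonde product `∏_{k<l} (X_k - X_l)`
divides the alternant `det[X_k^{c_j}]` for any injective exponent
function `c`. -/
theorem stmt9 (m : ℕ) (hm : 1 ≤ m) (c : Fin m → ℕ) (hc : Function.Injective c) :
    (∏ k : Fin m, ∏ l ∈ Finset.Ioi k,
        ((X k : MvPolynomial (Fin m) ℤ) - X l)) ∣
      Matrix.det (Matrix.of fun k j : Fin m =>
        (X k : MvPolynomial (Fin m) ℤ) ^ c j) :=
  stmt9_general m c
end

section
/- Fix integers m ≥ 1, p ≥ 1, n = m + p, and define P : ℕ → ℤ by P(k) = n·(−1)^{(k/n)(m−1)} if k ≥ 1 and n divides k, and P(k) = 0 otherwise. Let μ_1 ≥ μ_2 ≥ ⋯ ≥ μ_m ≥ 0 be integers with μ_1 + ⋯ + μ_m = mp. Then det[(P(μ_j + m + i − j))_{1≤i,j≤m}] = n^m if μ = (p, p, …, p), and det[(P(μ_j + m + i − j))_{1≤i,j≤m}] = 0 otherwise. -/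
/-!
Expand the determinant by the Leibniz formula. A term for the permutation `σ` can only be
nonzero if `n` divides every index `k_j = μ_j + m + σ(j) - j`. These indices are positive and
add up to `Σ μ_j + m² = m·n`, so each `k_j` equals `n`, i.e. `μ_j + σ(j) = p + j`. As `μ` is
antitone, `σ` is then strictly monotone, hence the identity, and `μ = (p, …, p)`. In that case
the only surviving term is the diagonal one, `(n·(-1)^(m-1))^m = n^m`.
-/

/-- The power sums of the roots of `z^n + (-1)^m`:
`P(k) = n·(-1)^{(k/n)(m-1)}` if `k ≥ 1` and `n ∣ k`, else `0`. -/
def Psum (m n : ℕ) (k : ℕ) : ℤ :=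
  if 1 ≤ k ∧ n ∣ k then (n : ℤ) * (-1 : ℤ) ^ ((k / n) * (m - 1)) else 0

open Finset

theorem Psum_self (m n : ℕ) : Psum m n n = n * (-1 : ℤ) ^ (m - 1) := by
  rcases n.eq_zero_or_pos with rfl | hn
  · simp [Psum]
  · simp [Psum, Nat.div_self hn, Nat.one_le_iff_ne_zero.mpr hn.ne']

theorem dvd_of_Psum_ne_zero {m n k : ℕ} (h : Psum m n k ≠ 0) : n ∣ k := by
  by_contra hk
  exact h (by simp [Psum, hk])

theorem eq_of_dvd_of_sum_eq_card_mul {ι : Type*} {s : Finset ι} {f : ι → ℕ} {n : ℕ}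
    (hpos : ∀ i ∈ s, 0 < f i) (hdvd : ∀ i ∈ s, n ∣ f i)
    (hsum : ∑ i ∈ s, f i = #s * n) :
    ∀ i ∈ s, f i = n := by
  have hle : ∀ i ∈ s, n ≤ f i := fun i hi => Nat.le_of_dvd (hpos i hi) (hdvd i hi)
  have hconst : ∑ _i ∈ s, n = ∑ i ∈ s, f i := by rw [hsum, sum_const, smul_eq_mul]
  exact fun i hi => ((sum_eq_sum_iff_of_le hle).1 hconst i hi).symm

theorem sum_add_add_perm_sub_self {m : ℕ} (μ : Fin m → ℕ) (σ : Equiv.Perm (Fin m)) :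
    ∑ j, (μ j + m + σ j - j) = ∑ j, μ j + m * m := by
  have hsub :
      ∑ j, (μ j + m + σ j - j) + ∑ j : Fin m, (j : ℕ) = ∑ j, (μ j + m + σ j) := by
    rw [← sum_add_distrib]
    exact sum_congr rfl fun j _ => Nat.sub_add_cancel (by omega)
  rw [sum_add_distrib, sum_add_distrib, Equiv.sum_comp σ (fun j : Fin m => (j : ℕ))] at hsub
  simp only [sum_const, card_univ, Fintype.card_fin, smul_eq_mul] at hsub
  omega

theorem strictMono_of_antitone_add_eq {m p : ℕ} {μ : Fin m → ℕ} {σ : Fin m → Fin m}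
    (hμ : Antitone μ) (h : ∀ j, μ j + σ j = p + j) : StrictMono σ := by
  intro a b hab
  have := hμ hab.le
  have := h a
  have := h b
  simp only [Fin.lt_def] at hab ⊢
  omega

theorem eq_one_and_eq_const_of_dvd_add_add_perm_sub {m p n : ℕ} {μ : Fin m → ℕ}
    (hn : n = m + p) (hμ : Antitone μ) (hsum : ∑ j, μ j = m * p) (σ : Equiv.Perm (Fin m))
    (hdvd : ∀ j, n ∣ μ j + m + σ j - j) :
    σ = 1 ∧ ∀ j, μ j = p := by
  have hindex : ∀ j, μ j + m + σ j - j = n := by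
    refine fun j => eq_of_dvd_of_sum_eq_card_mul (s := univ) (fun j _ => ?_) (fun j _ => hdvd j)
      ?_ j (mem_univ j)
    · omega
    · rw [sum_add_add_perm_sub_self, hsum, card_univ, Fintype.card_fin, hn]
      ring
  have hσ : (σ : Fin m → Fin m) = id :=
    (strictMono_of_antitone_add_eq (p := p) hμ fun j => by have := hindex j; omega).eq_id
  have hσ1 : σ = 1 := Equiv.ext (congrFun hσ)
  refine ⟨hσ1, fun j => ?_⟩
  have := hindex j
  simp only [hσ1, Equiv.Perm.one_apply] at this
  omega

theorem stmt13_general (m p : ℕ) (n : ℕ) (hn : n = m + p)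
    (μ : Fin m → ℕ) (hμ : Antitone μ) (hsum : ∑ j, μ j = m * p) :
    Matrix.det (Matrix.of fun i j : Fin m =>
        Psum m n (μ j + m + (i : ℕ) - (j : ℕ))) =
      if ∀ j, μ j = p then (n : ℤ) ^ m else 0 := by
  have hvanish : ∀ σ : Equiv.Perm (Fin m), ¬(σ = 1 ∧ ∀ j, μ j = p) →
      ∏ j, Psum m n (μ j + m + σ j - j) = 0 := fun σ hσ => by_contra fun hprod =>
    hσ <| eq_one_and_eq_const_of_dvd_add_add_perm_sub hn hμ hsum σ fun j =>
      dvd_of_Psum_ne_zero fun h => hprod (prod_eq_zero (mem_univ j) h)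
  simp only [Matrix.det_apply, Matrix.of_apply]
  split_ifs with hconst
  · rw [sum_eq_single 1 (fun σ _ hσ1 => by
        rw [hvanish σ (hσ1 ·.1), smul_zero]) (by simp)]
    have hdiag : ∀ j : Fin m, μ j + m + j - j = n := fun j => by rw [hconst j]; omega
    simp only [Equiv.Perm.sign_one, Equiv.Perm.one_apply, one_smul, hdiag, Psum_self,
      prod_const, card_univ, Fintype.card_fin, mul_pow, ← pow_mul, mul_comm (m - 1) m,
      (Nat.even_mul_pred_self m).neg_one_pow, mul_one]
  · exact sum_eq_zero fun σ _ => by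
      rw [hvanish σ (hconst ·.2), smul_zero]

/-- For a partition `μ_1 ≥ ⋯ ≥ μ_m ≥ 0` with `Σ μ_j = m·p`, the determinant
`det[P(μ_j + m + i - j)]` equals `n^m` when `μ = (p,…,p)` and `0` otherwise. -/
theorem stmt13 (m p : ℕ) (hm : 1 ≤ m) (hp : 1 ≤ p) (n : ℕ) (hn : n = m + p)
    (μ : Fin m → ℕ) (hμ : Antitone μ) (hsum : ∑ j, μ j = m * p) :
    Matrix.det (Matrix.of fun i j : Fin m =>
        Psum m n (μ j + m + (i : ℕ) - (j : ℕ))) =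
      if ∀ j, μ j = p then (n : ℤ) ^ m else 0 :=
  stmt13_general m p n hn μ hμ hsum
end

section
/- Verification of the initial conditions of the quantum-cohomology formula: let μ_1 ≥ μ_2 ≥ ⋯ ≥ μ_m ≥ 0 be integers with μ_1 + ⋯ + μ_m = mp. Then (−1)^{m(m−1)/2} n^{−m} Σ_{I ⊆ R, #I = m} (∏_{k=1}^m y_k) · ∏_{1≤k<l≤m}(y_k − y_l) · det[(y_k^{\,μ_j + m − j})_{1≤k,j≤m}] equals 1 if μ = (p, p, …, p) and equals 0 otherwise, where y_1, …, y_m is any listing of the m-element subset I. -/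
/-!
Up to the sign `(-1)^(m(m-1)/2)`, `∏_{k<l} (y_k - y_l)` is the Vandermonde determinant, so with
`b_j = μ_j + m - 1 - j` the summand `(∏ y_k) · det[y_k^j] · det[y_k^(b_j)]` does not depend on the
listing and vanishes when two `y_k` coincide: the sum over `m`-subsets of `R` is `1/m!` times the
sum over all of `R^m`. Expanding both determinants turns the latter into
`∑_{σ,τ} sgn σ sgn τ ∏_k P(1 + σ k + b_(τ k))`, where the power sum `P(s) = ∑_{y ∈ R} y^s` is
`n·α^s` when `n ∣ s` and `0` otherwise (`α^n = (-1)^(m+1)`). The exponents `1 + σ k + b_(τ k)` are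
positive and add up to `m·n`, so a nonzero term needs all of them equal to `n`. Since `b` is
strictly decreasing, this forces `b_j = n - 1 - j`, i.e. `μ = (p,…,p)`, and `τ = σ`; each of the
`m!` surviving terms is `(n·(-1)^(m+1))^m = n^m`.
-/

/-- The finite set of the `n` roots of `z^n + (-1)^m` in `ℂ`
(the `n` distinct complex numbers `y` with `y^n = (-1)^{m+1}`). -/
noncomputable def rootsF (m n : ℕ) : Finset ℂ :=
  (Polynomial.nthRoots n ((-1 : ℂ) ^ (m + 1))).toFinset

open Finset Equiv Function Polynomial
open scoped Nat

lemma IsPrimitiveRoot.sum_pow_nthRoots_toFinset {K : Type*} [Field K] [DecidableEq K]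
    {n : ℕ} {ζ α : K} (hζ : IsPrimitiveRoot ζ n) (hα : α ≠ 0) (s : ℕ) :
    ∑ y ∈ (nthRoots n (α ^ n)).toFinset, y ^ s = if n ∣ s then (n : K) * α ^ s else 0 := by
  rw [hζ.nthRoots_eq rfl, Multiset.toFinset_map, Multiset.toFinset_range,
    sum_image (hζ.injOn_pow_mul hα)]
  simp_rw [mul_pow, ← pow_mul, mul_comm _ s, pow_mul, ← sum_mul]
  split_ifs with hs
  · simp [(hζ.pow_eq_one_iff_dvd s).2 hs]
  · have hζs : ζ ^ s ≠ 1 := mt (hζ.pow_eq_one_iff_dvd s).1 hs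
    rw [geom_sum_eq hζs, ← pow_mul, mul_comm s n, pow_mul, hζ.pow_eq_one, one_pow, sub_self,
      zero_div, zero_mul]

section Alternant

variable {R : Type*} [CommRing R] {m : ℕ}

def alternant (c : Fin m → ℕ) (v : Fin m → R) : R :=
  (Matrix.of fun k j => v k ^ c j).det

lemma alternant_comp_perm (c : Fin m → ℕ) (v : Fin m → R) (π : Perm (Fin m)) :
    alternant c (v ∘ π) = Perm.sign π • alternant c v := by
  rw [Units.smul_def, zsmul_eq_mul, alternant, alternant, ← Matrix.det_permute]
  rfl

lemma alternant_eq_zero_of_not_injective (c : Fin m → ℕ) {v : Fin m → R}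
    (hv : ¬ Injective v) : alternant c v = 0 := by
  obtain ⟨k, l, hkl, hne⟩ := not_injective_iff.1 hv
  exact Matrix.det_zero_of_row_eq hne (funext fun j => by simp [hkl])

lemma alternant_eq_sum (c : Fin m → ℕ) (v : Fin m → R) :
    alternant c v = ∑ σ : Perm (Fin m), Perm.sign σ • ∏ k, v k ^ c (σ k) := by
  rw [alternant, ← Matrix.det_transpose, Matrix.det_apply]
  rfl

lemma prod_prod_Ioi_sub_eq_neg_one_pow_mul_alternant (v : Fin m → R) :
    ∏ k, ∏ l ∈ Ioi k, (v k - v l) =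
      (-1) ^ (m * (m - 1) / 2) * alternant (fun j => (j : ℕ)) v := by
  have hneg : ∀ k, ∏ l ∈ Ioi k, (v k - v l) = (-1) ^ #(Ioi k) * ∏ l ∈ Ioi k, (v l - v k) :=
    fun k => by
      rw [← prod_const, ← prod_mul_distrib]
      exact prod_congr rfl fun l _ => by ring
  have hcard : ∑ k : Fin m, #(Ioi k) = m * (m - 1) / 2 := by
    simp_rw [Fin.card_Ioi]
    rw [Fin.sum_univ_eq_sum_range (fun i => m - 1 - i), sum_range_reflect (fun i => i) m,
      sum_range_id]
  rw [prod_congr rfl fun k _ => hneg k, prod_mul_distrib, prod_pow_eq_pow_sum, hcard]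
  exact congrArg _ (Matrix.det_vandermonde v).symm

def alternantProduct (c : Fin m → ℕ) (v : Fin m → R) : R :=
  (∏ k, v k) * alternant (fun j => (j : ℕ)) v * alternant c v

lemma prod_mul_prod_prod_Ioi_sub_mul_alternant (c : Fin m → ℕ) (v : Fin m → R) :
    (∏ k, v k) * (∏ k, ∏ l ∈ Ioi k, (v k - v l)) * alternant c v =
      (-1) ^ (m * (m - 1) / 2) * alternantProduct c v := by
  rw [prod_prod_Ioi_sub_eq_neg_one_pow_mul_alternant, alternantProduct]
  ring

lemma alternantProduct_comp_perm (c : Fin m → ℕ) (v : Fin m → R) (π : Perm (Fin m)) :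
    alternantProduct c (v ∘ π) = alternantProduct c v := by
  rw [alternantProduct, alternantProduct, alternant_comp_perm, alternant_comp_perm,
    Fintype.prod_equiv π (fun k => (v ∘ π) k) v (fun _ => rfl)]
  simp only [mul_smul_comm, smul_mul_assoc, smul_smul, Int.units_mul_self, one_smul]

lemma alternantProduct_eq_zero_of_not_injective (c : Fin m → ℕ) {v : Fin m → R}
    (hv : ¬ Injective v) : alternantProduct c v = 0 := by
  rw [alternantProduct, alternant_eq_zero_of_not_injective _ hv, mul_zero, zero_mul]

lemma sum_piFinset_alternantProduct (s : Finset R) (c : Fin m → ℕ) :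
    ∑ v ∈ Fintype.piFinset fun _ => s, alternantProduct c v =
      ∑ σ : Perm (Fin m), ∑ τ : Perm (Fin m),
        (Perm.sign σ * Perm.sign τ) • ∏ k, ∑ x ∈ s, x ^ (1 + (σ k : ℕ) + c (τ k)) := by
  have hexpand : ∀ v : Fin m → R, alternantProduct c v = ∑ σ : Perm (Fin m),
      ∑ τ : Perm (Fin m), (Perm.sign σ * Perm.sign τ) •
        ∏ k, v k ^ (1 + (σ k : ℕ) + c (τ k)) := by
    intro v
    simp_rw [alternantProduct, alternant_eq_sum, mul_assoc, sum_mul_sum, mul_sum,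
      smul_mul_smul_comm, mul_smul_comm, ← prod_mul_distrib, pow_add, pow_one, mul_assoc]
  simp_rw [hexpand, ← sum_prod_piFinset s]
  rw [sum_comm]
  refine sum_congr rfl fun σ _ => ?_
  rw [sum_comm]
  simp_rw [← smul_sum]

end Alternant

section Symmetrization

variable {α : Type*} {m : ℕ}

lemma exists_perm_eq_comp_of_range_eq {v w : Fin m → α} (hv : Injective v) (hw : Injective w)
    (h : Set.range v = Set.range w) : ∃ π : Perm (Fin m), v = w ∘ π :=
  ⟨(ofInjective v hv).trans ((setCongr h).trans (ofInjective w hw).symm), funext fun k =>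
    (apply_ofInjective_symm hw ⟨v k, h ▸ ⟨k, rfl⟩⟩).symm⟩

lemma image_univ_eq_of_injective [DecidableEq α] {v : Fin m → α} {I : Finset α}
    (hv : Injective v) (hvI : ∀ k, v k ∈ I) (hI : #I = m) : univ.image v = I :=
  eq_of_subset_of_card_le (image_subset_iff.2 fun k _ => hvI k) <| by
    rw [card_image_of_injective _ hv, card_univ, Fintype.card_fin, hI]

variable [DecidableEq α] {M : Type*} [AddCommMonoid M] {f : (Fin m → α) → M}

open scoped Classical in
lemma sum_filter_image_eq_factorial_smul (hf : ∀ v (π : Perm (Fin m)), f (v ∘ π) = f v)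
    (t : Finset (Fin m → α)) {w : Fin m → α} (hw : Injective w)
    (hwt : ∀ π : Perm (Fin m), w ∘ π ∈ t) :
    ∑ v ∈ t with Injective v ∧ univ.image v = univ.image w, f v = m ! • f w := by
  have hcard : m ! = #(univ : Finset (Perm (Fin m))) := by
    rw [card_univ, Fintype.card_perm, Fintype.card_fin]
  rw [hcard, ← sum_const]
  refine (sum_bij (fun (π : Perm (Fin m)) _ => w ∘ π) (fun π _ => ?_) (fun π _ π' _ h => ?_)
    (fun v hv => ?_) (fun π _ => (hf w π).symm)).symm
  · simp only [mem_filter, hwt π, hw.comp π.injective, true_and, ← image_image, image_univ_equiv]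
  · exact Equiv.ext fun k => hw (congrFun h k)
  · obtain ⟨-, hv, himage⟩ := mem_filter.1 hv
    have hrange : Set.range v = Set.range w := by
      simpa only [coe_image, coe_univ, Set.image_univ] using congrArg SetLike.coe himage
    obtain ⟨π, rfl⟩ := exists_perm_eq_comp_of_range_eq hv hw hrange
    exact ⟨π, mem_univ _, rfl⟩

lemma sum_piFinset_eq_factorial_smul_sum_powersetCard (s : Finset α)
    (hf_perm : ∀ v (π : Perm (Fin m)), f (v ∘ π) = f v)
    (hf_zero : ∀ v, ¬ Injective v → f v = 0) (L : Finset α → Fin m → α)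
    (hL : ∀ I : Finset α, #I = m → Injective (L I) ∧ ∀ k, L I k ∈ I) :
    ∑ v ∈ Fintype.piFinset fun _ => s, f v = m ! • ∑ I ∈ s.powersetCard m, f (L I) := by
  classical
  rw [← sum_filter_of_ne (p := fun v : Fin m → α => Injective v)
    fun v _ h => by_contra fun hv => h (hf_zero v hv)]
  have himage : ∀ v ∈ (Fintype.piFinset fun _ => s).filter fun v : Fin m → α => Injective v,
      univ.image v ∈ s.powersetCard m := fun v hv => by
    obtain ⟨hvs, hv⟩ := mem_filter.1 hv
    refine mem_powersetCard.2 ⟨image_subset_iff.2 fun k _ => Fintype.mem_piFinset.1 hvs k, ?_⟩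
    rw [card_image_of_injective _ hv, card_univ, Fintype.card_fin]
  rw [← sum_fiberwise_of_maps_to himage, smul_sum]
  refine sum_congr rfl fun I hI => ?_
  obtain ⟨hIs, hIcard⟩ := mem_powersetCard.1 hI
  obtain ⟨hLinj, hLmem⟩ := hL I hIcard
  conv_lhs => rw [filter_filter, ← image_univ_eq_of_injective hLinj hLmem hIcard]
  exact sum_filter_image_eq_factorial_smul hf_perm _ hLinj fun π =>
    Fintype.mem_piFinset.2 fun k => hIs (hLmem (π k))

end Symmetrization

section Exponents

lemma eq_of_dvd_of_sum_eq_card_mul_s14 {ι : Type*} [Fintype ι] {n : ℕ} {e : ι → ℕ}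
    (hdvd : ∀ k, n ∣ e k) (hpos : ∀ k, 0 < e k) (hsum : ∑ k, e k = Fintype.card ι * n)
    (k : ι) : e k = n := by
  have hle : ∀ k ∈ univ, n ≤ e k := fun k _ => Nat.le_of_dvd (hpos k) (hdvd k)
  rw [← smul_eq_mul, ← card_univ, ← sum_const] at hsum
  exact ((sum_eq_sum_iff_of_le hle).1 hsum.symm k (mem_univ k)).symm

variable {m p : ℕ} {μ : Fin m → ℕ}

lemma sum_shifted_exponents (hsum : ∑ j, μ j = m * p) (σ τ : Perm (Fin m)) :
    ∑ k, (1 + (σ k : ℕ) + (μ (τ k) + (m - 1 - τ k))) = m * (m + p) :=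
  calc ∑ k, (1 + (σ k : ℕ) + (μ (τ k) + (m - 1 - τ k)))
      = ∑ k, (1 + (σ k : ℕ)) + ∑ k, (μ (τ k) + (m - 1 - τ k)) := sum_add_distrib
    _ = ∑ j : Fin m, (1 + (j : ℕ)) + ∑ j, (μ j + (m - 1 - j)) := by
      rw [Equiv.sum_comp σ (fun j => 1 + (j : ℕ)), Equiv.sum_comp τ (fun j => μ j + (m - 1 - j))]
    _ = ∑ j, (m + μ j) := by
      rw [← sum_add_distrib]
      exact sum_congr rfl fun j _ => by omega
    _ = m * (m + p) := by
      rw [sum_add_distrib, hsum, sum_const, card_univ, Fintype.card_fin, smul_eq_mul, mul_add]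

lemma shifted_exponents_eq_iff (hμ : Antitone μ) (σ τ : Perm (Fin m)) :
    (∀ k, 1 + (σ k : ℕ) + (μ (τ k) + (m - 1 - τ k)) = m + p) ↔ (∀ j, μ j = p) ∧ τ = σ := by
  set b : Fin m → ℕ := fun j => μ j + (m - 1 - j)
  set g : Fin m → ℕ := fun j => p + (m - 1 - j)
  have hg : StrictAnti g := fun i j hij => by
    have : (j : ℕ) < m := j.isLt
    simp only [g]
    omega
  constructor
  · intro h
    have hcomp : b ∘ τ = g ∘ σ := funext fun k => by
      have := h k
      have := (σ k).isLt
      simp only [Function.comp_apply, b, g]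
      omega
    have hb : StrictAnti b := fun i j hij => by
      have := hμ hij.le
      have : (j : ℕ) < m := j.isLt
      simp only [b]
      omega
    have hbg : b = g := (hb.range_inj hg).1 <| by
      rw [← τ.surjective.range_comp, hcomp, σ.surjective.range_comp]
    refine ⟨fun j => by simpa [b, g] using congrFun hbg j, ?_⟩
    rw [hbg] at hcomp
    exact Equiv.ext fun k => hg.injective (congrFun hcomp k)
  · rintro ⟨hμp, hτσ⟩ k
    have : (σ k : ℕ) < m := (σ k).isLt
    rw [hτσ, hμp]
    omega

lemma prod_sum_pow_nthRoots_shifted {K : Type*} [Field K] [DecidableEq K] {ζ α : K}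
    (hζ : IsPrimitiveRoot ζ (m + p)) (hα : α ≠ 0) (hμ : Antitone μ)
    (hsum : ∑ j, μ j = m * p) (σ τ : Perm (Fin m)) :
    ∏ k, ∑ y ∈ (nthRoots (m + p) (α ^ (m + p))).toFinset,
        y ^ (1 + (σ k : ℕ) + (μ (τ k) + (m - 1 - τ k))) =
      if (∀ j, μ j = p) ∧ τ = σ then (((m + p : ℕ) : K) * α ^ (m + p)) ^ m else 0 := by
  simp_rw [hζ.sum_pow_nthRoots_toFinset hα]
  by_cases hdvd : ∀ k, m + p ∣ 1 + (σ k : ℕ) + (μ (τ k) + (m - 1 - τ k))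
  · have he := eq_of_dvd_of_sum_eq_card_mul_s14 hdvd (fun _ => by omega)
      (by rw [Fintype.card_fin, sum_shifted_exponents hsum])
    simp_rw [if_pos ((shifted_exponents_eq_iff hμ σ τ).1 he), he, if_pos (dvd_refl _)]
    rw [prod_const, card_univ, Fintype.card_fin]
  · rw [if_neg fun h => hdvd fun k => (shifted_exponents_eq_iff hμ σ τ).2 h k ▸ dvd_refl _]
    obtain ⟨k, hk⟩ := not_forall.1 hdvd
    exact prod_eq_zero (mem_univ k) (if_neg hk)

lemma sum_piFinset_alternantProduct_nthRoots {K : Type*} [Field K] [DecidableEq K] {ζ α : K}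
    (hζ : IsPrimitiveRoot ζ (m + p)) (hα : α ≠ 0) (hμ : Antitone μ)
    (hsum : ∑ j, μ j = m * p) :
    ∑ v ∈ Fintype.piFinset fun _ => (nthRoots (m + p) (α ^ (m + p))).toFinset,
        alternantProduct (fun j => μ j + (m - 1 - (j : ℕ))) v =
      if ∀ j, μ j = p then m ! • (((m + p : ℕ) : K) * α ^ (m + p)) ^ m else 0 := by
  rw [sum_piFinset_alternantProduct]
  simp_rw [prod_sum_pow_nthRoots_shifted hζ hα hμ hsum]
  split_ifs with hμp
  · simp only [hμp, implies_true, true_and, smul_ite, smul_zero, sum_ite_eq', mem_univ,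
      if_true, Int.units_mul_self, one_smul, sum_const, card_univ, Fintype.card_perm,
      Fintype.card_fin]
  · simp [hμp]

end Exponents

theorem stmt14_general (m p : ℕ) (hm : 1 ≤ m) (n : ℕ) (hn : n = m + p)
    (μ : Fin m → ℕ) (hμ : Antitone μ) (hsum : ∑ j, μ j = m * p)
    (L : Finset ℂ → (Fin m → ℂ))
    (hL : ∀ I : Finset ℂ, I.card = m →
      Function.Injective (L I) ∧ ∀ k, L I k ∈ I) :
    (-1 : ℂ) ^ (m * (m - 1) / 2) * ((n : ℂ) ^ m)⁻¹ *
        ∑ I ∈ (rootsF m n).powersetCard m,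
          (∏ k : Fin m, L I k) *
            (∏ k : Fin m, ∏ l ∈ Finset.Ioi k, (L I k - L I l)) *
            Matrix.det (Matrix.of fun k j : Fin m =>
              L I k ^ (μ j + (m - 1 - (j : ℕ)))) =
      if ∀ j, μ j = p then 1 else 0 := by
  subst hn
  obtain ⟨α, hα⟩ := IsAlgClosed.exists_pow_nat_eq ((-1 : ℂ) ^ (m + 1)) (by omega : 0 < m + p)
  have hα0 : α ≠ 0 := ne_zero_pow (n := m + p) (by omega) (by simp [hα])
  have hroots : rootsF m (m + p) = (nthRoots (m + p) (α ^ (m + p))).toFinset := by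
    rw [rootsF, hα]
  have hsymm := sum_piFinset_eq_factorial_smul_sum_powersetCard (rootsF m (m + p))
    (alternantProduct_comp_perm (fun j => μ j + (m - 1 - (j : ℕ))))
    (fun _ => alternantProduct_eq_zero_of_not_injective _) L hL
  rw [hroots, sum_piFinset_alternantProduct_nthRoots
    (Complex.isPrimitiveRoot_exp (m + p) (by omega)) hα0 hμ hsum, ← hroots, hα] at hsymm
  have hsign : (((-1 : ℂ) ^ (m + 1)) ^ m) = 1 := by
    rw [← pow_mul, mul_comm]
    exact (Nat.even_mul_succ_self m).neg_one_pow
  rw [mul_pow, hsign, mul_one] at hsymm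
  simp_rw [← alternant.eq_def, prod_mul_prod_prod_Ioi_sub_mul_alternant, ← mul_sum]
  split_ifs at hsymm ⊢
  · rw [← smul_right_injective ℂ (Nat.factorial_ne_zero m) hsymm]
    have hn0 : ((m + p : ℕ) : ℂ) ≠ 0 := by norm_cast; omega
    field_simp
    rw [← pow_mul, mul_comm, pow_mul, neg_one_sq, one_pow]
  · rw [(smul_eq_zero.1 hsymm.symm).resolve_left (Nat.factorial_ne_zero m), mul_zero, mul_zero]

/-- Initial conditions of the Vafa–Intriligator formula: for any partition
`μ_1 ≥ ⋯ ≥ μ_m ≥ 0` with `Σ μ_j = m·p`,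
`(-1)^{m(m-1)/2} n^{-m} Σ_{I ⊆ R, #I = m} (∏ y_k)·∏_{k<l}(y_k - y_l)·det[y_k^{μ_j+m-j}]`
equals `1` if `μ = (p,…,p)` and `0` otherwise; here `y_1,…,y_m` is any listing
of the `m`-element subset `I` (the summand does not depend on the listing). -/
theorem stmt14 (m p : ℕ) (hm : 1 ≤ m) (hp : 1 ≤ p) (n : ℕ) (hn : n = m + p)
    (μ : Fin m → ℕ) (hμ : Antitone μ) (hsum : ∑ j, μ j = m * p)
    (L : Finset ℂ → (Fin m → ℂ))
    (hL : ∀ I : Finset ℂ, I.card = m →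
      Function.Injective (L I) ∧ ∀ k, L I k ∈ I) :
    (-1 : ℂ) ^ (m * (m - 1) / 2) * ((n : ℂ) ^ m)⁻¹ *
        ∑ I ∈ (rootsF m n).powersetCard m,
          (∏ k : Fin m, L I k) *
            (∏ k : Fin m, ∏ l ∈ Finset.Ioi k, (L I k - L I l)) *
            Matrix.det (Matrix.of fun k j : Fin m =>
              L I k ^ (μ j + (m - 1 - (j : ℕ)))) =
      if ∀ j, μ j = p then 1 else 0 :=
  stmt14_general m p hm n hn μ hμ hsum L hL
end

section
/- The root-sum expression satisfies the Pieri recurrence: for an m-tuple α = (α_1, …, α_m) of integers with w(α) := Σ_{l=1}^m (α_l − l) ≥ 1, define F(α) = (−1)^{m(m−1)/2} n^{−m} Σ_{I ⊆ R, #I = m} (∏_{k=1}^m y_k) · (Σ_{k=1}^m y_k)^{w(α)} · ∏_{1≤k<l≤m}(y_k − y_l) · det[(y_k^{\,n−α_j})_{1≤k,j≤m}], where y_1, …, y_m lists I and powers with negative integer exponents are interpreted via inverses (every y ∈ R is nonzero). Then F(α) = Σ_{a=1}^m F(α − e_a), where e_a is the a-th standard basis vector of ℤ^m. -/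
/-- The root-sum expression
`F(β) = (-1)^{m(m-1)/2} n^{-m} Σ_{I ⊆ R, #I = m}
(∏ y_k)·(Σ y_k)^{w(β)}·∏_{k<l}(y_k - y_l)·det[y_k^{n-β_j}]`,
where `w(β) = Σ_l (β_l - l)`, `y_1,…,y_m` lists the subset `I` via `L`, and
negative integer powers are interpreted via inverses. -/
noncomputable def Fval (m n : ℕ) (L : Finset ℂ → (Fin m → ℂ))
    (β : Fin m → ℤ) : ℂ :=
  (-1 : ℂ) ^ (m * (m - 1) / 2) * ((n : ℂ) ^ m)⁻¹ *
    ∑ I ∈ (rootsF m n).powersetCard m,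
      (∏ k : Fin m, L I k) *
        (∑ k : Fin m, L I k) ^ (∑ l : Fin m, (β l - ((l : ℤ) + 1))) *
        (∏ k : Fin m, ∏ l ∈ Finset.Ioi k, (L I k - L I l)) *
        Matrix.det (Matrix.of fun k j : Fin m => L I k ^ ((n : ℤ) - β j))

/-!
Expanding the determinant over permutations shows that multiplying `det[y_k^{c_j}]` by
`y_1 + ⋯ + y_m` amounts to raising each column exponent by one in turn:
`(Σ_k y_k) · det[y_k^{c_j}] = Σ_a det[y_k^{c_j + δ_{ja}}]` (all `y_k ≠ 0`).
Lowering `α_a` by one lowers `w(α)` by one and raises the exponent `n - α_a` by one, so splitting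
one factor `Σ_k y_k` off `(Σ_k y_k)^{w(α)}`, which is valid for any value of the sum because
`w(α) ≥ 1`, gives the recurrence summand by summand.
-/

open Finset

theorem Polynomial.ne_zero_of_mem_nthRoots {R : Type*} [CommRing R] [IsDomain R] {n : ℕ}
    {a x : R} (ha : a ≠ 0) (hx : x ∈ Polynomial.nthRoots n a) : x ≠ 0 := by
  rcases n.eq_zero_or_pos with rfl | hn
  · simp [Polynomial.nthRoots_zero] at hx
  · rintro rfl
    rw [Polynomial.mem_nthRoots hn, zero_pow hn.ne'] at hx
    exact ha hx.symm

theorem ne_zero_of_mem_rootsF {m n : ℕ} {y : ℂ} (hy : y ∈ rootsF m n) : y ≠ 0 :=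
  Polynomial.ne_zero_of_mem_nthRoots (pow_ne_zero _ (neg_ne_zero.mpr one_ne_zero))
    (Multiset.mem_toFinset.mp hy)

theorem sum_sub_single_sub_succ {m : ℕ} (β : Fin m → ℤ) (a : Fin m) :
    ∑ l : Fin m, ((β - Pi.single a 1 : Fin m → ℤ) l - ((l : ℤ) + 1)) =
      ∑ l : Fin m, (β l - ((l : ℤ) + 1)) - 1 := by
  simp only [Pi.sub_apply, sum_sub_distrib, Finset.sum_pi_single', mem_univ, if_true]
  ring

section
variable {ι K : Type*} [Fintype ι] [DecidableEq ι] [Field K]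

theorem prod_zpow_add_single {x : ι → K} (hx : ∀ i, x i ≠ 0) (c : ι → ℤ) (a : ι) :
    ∏ i, x i ^ (c + Pi.single a 1 : ι → ℤ) i = x a * ∏ i, x i ^ c i := by
  simp only [Pi.add_apply, zpow_add₀ (hx _), prod_mul_distrib, mul_comm (x a)]
  congr 1
  rw [Fintype.prod_eq_single a fun i hi => by simp [hi]]
  simp

theorem sum_mul_det_zpow (y : ι → K) (hy : ∀ k, y k ≠ 0) (c : ι → ℤ) :
    (∑ k, y k) * (Matrix.of fun k j => y k ^ c j).det =
      ∑ a, (Matrix.of fun k j => y k ^ (c + Pi.single a 1 : ι → ℤ) j).det := by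
  simp only [Matrix.det_apply', Matrix.of_apply, mul_sum]
  rw [sum_comm]
  refine sum_congr rfl fun σ _ => ?_
  simp only [prod_zpow_add_single (fun i => hy (σ i)), ← mul_assoc, mul_comm _ (y _),
    ← sum_mul, Equiv.sum_comp σ y]

theorem zpow_sum_mul_det_eq_sum_sub_single {m : ℕ} (y : Fin m → K)
    (hy : ∀ k, y k ≠ 0) (P V : K) (N : ℤ) (β : Fin m → ℤ)
    (hw : 1 ≤ ∑ l : Fin m, (β l - ((l : ℤ) + 1))) :
    P * (∑ k, y k) ^ (∑ l : Fin m, (β l - ((l : ℤ) + 1))) * V *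
        (Matrix.of fun k j => y k ^ (N - β j)).det =
      ∑ a : Fin m,
        P * (∑ k, y k) ^
            (∑ l : Fin m, ((β - Pi.single a 1 : Fin m → ℤ) l - ((l : ℤ) + 1))) * V *
          (Matrix.of fun k j => y k ^ (N - (β - Pi.single a 1 : Fin m → ℤ) j)).det := by
  have hcol : ∀ (a : Fin m) j, N - (β - Pi.single a 1 : Fin m → ℤ) j =
      ((fun j => N - β j) + Pi.single a 1 : Fin m → ℤ) j :=
    fun a j => by simp only [Pi.sub_apply, Pi.add_apply]; ring
  have hpow : (∑ k, y k) ^ (∑ l : Fin m, (β l - ((l : ℤ) + 1))) =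
      (∑ k, y k) ^ (∑ l : Fin m, (β l - ((l : ℤ) + 1)) - 1) * ∑ k, y k := by
    conv_lhs => rw [← sub_add_cancel (∑ l : Fin m, (β l - ((l : ℤ) + 1))) 1]
    rw [zpow_add' (Or.inr (Or.inl (by omega))), zpow_one]
  simp only [sum_sub_single_sub_succ, hcol, ← mul_sum, ← sum_mul_det_zpow y hy, hpow]
  ring

end

theorem stmt15_general (m : ℕ) (n : ℕ)
    (L : Finset ℂ → (Fin m → ℂ))
    (hL : ∀ I : Finset ℂ, I.card = m →
      Function.Injective (L I) ∧ ∀ k, L I k ∈ I)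
    (α : Fin m → ℤ) (hw : 1 ≤ ∑ l : Fin m, (α l - ((l : ℤ) + 1))) :
    Fval m n L α = ∑ a : Fin m, Fval m n L (α - Pi.single a 1) := by
  unfold Fval
  rw [← mul_sum, sum_comm]
  refine congrArg _ (sum_congr rfl fun I hI => ?_)
  obtain ⟨hIsub, hIcard⟩ := mem_powersetCard.mp hI
  exact zpow_sum_mul_det_eq_sum_sub_single (L I)
    (fun k => ne_zero_of_mem_rootsF (hIsub ((hL I hIcard).2 k))) _ _ _ α hw

/-- The root-sum expression satisfies the Pieri recurrence:
for every integer tuple `α` of weight `w(α) ≥ 1`,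
`F(α) = Σ_a F(α - e_a)`. -/
theorem stmt15 (m p : ℕ) (hm : 1 ≤ m) (hp : 1 ≤ p) (n : ℕ) (hn : n = m + p)
    (L : Finset ℂ → (Fin m → ℂ))
    (hL : ∀ I : Finset ℂ, I.card = m →
      Function.Injective (L I) ∧ ∀ k, L I k ∈ I)
    (α : Fin m → ℤ) (hw : 1 ≤ ∑ l : Fin m, (α l - ((l : ℤ) + 1))) :
    Fval m n L α = ∑ a : Fin m, Fval m n L (α - Pi.single a 1) :=
  stmt15_general m n L hL α hw
end
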